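/- arXiv:1407.5236 — 4 statements merged into one kernel-verified Lean document; each statement's English description precedes it below -/
import Mathlib

section
/- For all integers s ≥ 0 and t ≥ 1, there exists a finite simple graph G such that K_{t+1} is not a minor of G, and there is no partition of V(G) into t − 1 sets X_1, …, X_{t−1} with the property that for each i with 1 ≤ i ≤ t − 1 the subgraph of G induced on X_i has maximum degree at most s. -/
/-!
Let `G₀` be a single vertex and let `G_{k+1}` be an apex vertex joined to `s + 1` disjoint copies
of `G_k`. Then `G_k` has no `K_{k+2}` minor: at most one branch set contains the apex, and the other
`k + 2` branch sets are connected, avoid the apex and are pairwise adjacent, so they all lie in one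
copy of `G_{k-1}`. Nor does `G_k` have a partition into `k` parts of maximum degree at most `s`:
the apex has a neighbour in every copy, so its part misses some copy entirely, and the remaining
`k - 1` parts restricted to that copy would partition `G_{k-1}`. Take `k = t - 1`.
-/

/-- `G` has a `K_n` minor: there are `n` nonempty, pairwise disjoint branch sets,
each inducing a connected subgraph, with an edge of `G` between any two of them. -/
def HasCompleteMinor {V : Type} (G : SimpleGraph V) (n : ℕ) : Prop :=
  ∃ f : Fin n → Set V,
    (∀ i, (f i).Nonempty) ∧
    (∀ i, (G.induce (f i)).Connected) ∧
    (Pairwise fun i j => Disjoint (f i) (f j)) ∧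
    (∀ i j, i ≠ j → ∃ x ∈ f i, ∃ y ∈ f j, G.Adj x y)

/-- Every vertex of `X` has at most `s` neighbours (w.r.t. `G`) inside `X`;
equivalently the subgraph of `G` induced on `X` has maximum degree at most `s`. -/
def MaxDegWithinLE {V : Type} (G : SimpleGraph V) (X : Set V) (s : ℕ) : Prop :=
  ∀ v ∈ X, ({u | u ∈ X ∧ G.Adj v u}).ncard ≤ s

theorem SimpleGraph.Preconnected.eq_of_forall_adj {V α : Type*} {G : SimpleGraph V}
    (hG : G.Preconnected) {g : V → α} (hg : ∀ ⦃u v⦄, G.Adj u v → g u = g v) (u v : V) :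
    g u = g v := by
  obtain ⟨w⟩ := hG u v
  induction w with
  | nil => rfl
  | cons huv _ ih => exact (hg huv).trans ih

section CliqueModel

variable {V W : Type} {G : SimpleGraph V} {H : SimpleGraph W} {n : ℕ}

def IsCliqueModel (G : SimpleGraph V) (f : Fin n → Set V) : Prop :=
  (∀ i, (f i).Nonempty) ∧
    (∀ i, (G.induce (f i)).Connected) ∧
    (Pairwise fun i j => Disjoint (f i) (f j)) ∧
    (∀ i j, i ≠ j → ∃ x ∈ f i, ∃ y ∈ f j, G.Adj x y)

theorem hasCompleteMinor_iff : HasCompleteMinor G n ↔ ∃ f : Fin n → Set V, IsCliqueModel G f :=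
  Iff.rfl

theorem IsCliqueModel.comp {m : ℕ} {f : Fin n → Set V} (hf : IsCliqueModel G f)
    {e : Fin m → Fin n} (he : Function.Injective e) : IsCliqueModel G (f ∘ e) := by
  obtain ⟨hne, hconn, hdisj, hadj⟩ := hf
  exact ⟨fun i => hne (e i), fun i => hconn (e i), fun i j hij => hdisj (he.ne hij),
    fun i j hij => hadj (e i) (e j) (he.ne hij)⟩

theorem IsCliqueModel.exists_forall_ne_notMem {f : Fin (n + 1) → Set V}
    (hf : IsCliqueModel G f) (v : V) : ∃ i₀, ∀ i, i ≠ i₀ → v ∉ f i := by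
  by_cases hv : ∃ i₀, v ∈ f i₀
  · obtain ⟨i₀, hi₀⟩ := hv
    exact ⟨i₀, fun i hi hvi => Set.disjoint_left.mp (hf.2.2.1 hi) hvi hi₀⟩
  · push Not at hv
    exact ⟨0, fun i _ => hv i⟩

theorem SimpleGraph.Embedding.connected_induce_preimage (φ : G ↪g H) {A : Set W}
    (hA : A ⊆ Set.range φ) (h : (H.induce A).Connected) :
    (G.induce (φ ⁻¹' A)).Connected := by
  have hbij : Set.BijOn φ (φ ⁻¹' A) A := by
    refine ⟨fun _ hv => hv, φ.injective.injOn, fun w hw => ?_⟩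
    obtain ⟨v, rfl⟩ := hA hw
    exact ⟨v, hw, rfl⟩
  exact (SimpleGraph.Iso.connected_iff ⟨hbij.equiv φ, φ.map_adj_iff⟩).mpr h

theorem IsCliqueModel.preimage {f : Fin n → Set W} (hf : IsCliqueModel H f) (φ : G ↪g H)
    (hrange : ∀ i, f i ⊆ Set.range φ) : IsCliqueModel G fun i => φ ⁻¹' f i := by
  obtain ⟨hne, hconn, hdisj, hadj⟩ := hf
  refine ⟨fun i => ?_, fun i => φ.connected_induce_preimage (hrange i) (hconn i),
    fun i j hij => (hdisj hij).preimage φ, fun i j hij => ?_⟩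
  · obtain ⟨w, hw⟩ := hne i
    obtain ⟨v, rfl⟩ := hrange i hw
    exact ⟨v, hw⟩
  · obtain ⟨x, hx, y, hy, hxy⟩ := hadj i j hij
    obtain ⟨u, rfl⟩ := hrange i hx
    obtain ⟨v, rfl⟩ := hrange j hy
    exact ⟨u, hx, v, hy, φ.map_adj_iff.mp hxy⟩

theorem HasCompleteMinor.of_iso (e : G ≃g H) (h : HasCompleteMinor H n) :
    HasCompleteMinor G n := by
  obtain ⟨f, hf⟩ := hasCompleteMinor_iff.mp h
  refine ⟨_, hf.preimage e.toEmbedding fun i w _ => ?_⟩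
  exact ⟨e.symm w, e.apply_symm_apply w⟩

end CliqueModel

section DefectivePartition

variable {V W ι : Type} {G : SimpleGraph V} {H : SimpleGraph W} {s : ℕ}

def IsDefectivePartition (G : SimpleGraph V) (s : ℕ) (X : ι → Set V) : Prop :=
  (Pairwise fun i j => Disjoint (X i) (X j)) ∧ (⋃ i, X i) = Set.univ ∧
    ∀ i, MaxDegWithinLE G (X i) s

theorem MaxDegWithinLE.comap [Finite W] {X : Set W} (h : MaxDegWithinLE H X s) (φ : G ↪g H) :
    MaxDegWithinLE G (φ ⁻¹' X) s := by
  intro v hv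
  refine le_trans ?_ (h (φ v) hv)
  refine Set.ncard_le_ncard_of_injOn φ ?_ φ.injective.injOn (Set.toFinite _)
  rintro u ⟨hu, huv⟩
  exact ⟨hu, φ.map_adj_iff.mpr huv⟩

theorem IsDefectivePartition.comap [Finite W] {X : ι → Set W} (h : IsDefectivePartition H s X)
    (φ : G ↪g H) : IsDefectivePartition G s fun i => φ ⁻¹' X i := by
  obtain ⟨hdisj, hcover, hdeg⟩ := h
  refine ⟨fun i j hij => (hdisj hij).preimage φ, ?_, fun i => (hdeg i).comap φ⟩
  rw [← Set.preimage_iUnion, hcover, Set.preimage_univ]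

theorem IsDefectivePartition.comp_succAbove {k : ℕ} {X : Fin (k + 1) → Set V}
    (h : IsDefectivePartition G s X) {i₀ : Fin (k + 1)} (hi₀ : X i₀ = ∅) :
    IsDefectivePartition G s (X ∘ i₀.succAbove) := by
  obtain ⟨hdisj, hcover, hdeg⟩ := h
  refine ⟨fun i j hij => hdisj (Fin.succAbove_right_injective.ne hij), ?_, fun i => hdeg _⟩
  refine Set.eq_univ_of_forall fun v => ?_
  obtain ⟨i, hi⟩ := Set.mem_iUnion.mp (hcover ▸ Set.mem_univ v)
  have hne : i ≠ i₀ := by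
    rintro rfl
    simp [hi₀] at hi
  obtain ⟨j, rfl⟩ := Fin.exists_succAbove_eq hne
  exact Set.mem_iUnion.mpr ⟨j, hi⟩

end DefectivePartition

section ApexJoin

variable {V : Type}

/-- The apex `none` joined to `s + 1` disjoint copies of `G`; `some (c, v)` is the vertex `v` of
copy `c`. -/
def apexJoin (s : ℕ) (G : SimpleGraph V) : SimpleGraph (Option (Fin (s + 1) × V)) where
  Adj
    | none, none => False
    | none, some _ => True
    | some _, none => True
    | some p, some q => p.1 = q.1 ∧ G.Adj p.2 q.2
  symm := by
    constructor
    rintro (_ | p) (_ | q) h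
    exacts [h, trivial, trivial, ⟨h.1.symm, h.2.symm⟩]
  loopless := by
    constructor
    rintro (_ | p) h
    exacts [h, h.2.ne rfl]

variable {G : SimpleGraph V} {s : ℕ}

@[simp]
theorem apexJoin_adj_some_some {p q : Fin (s + 1) × V} :
    (apexJoin s G).Adj (some p) (some q) ↔ p.1 = q.1 ∧ G.Adj p.2 q.2 :=
  Iff.rfl

def apexJoinCopy (G : SimpleGraph V) (c : Fin (s + 1)) : G ↪g apexJoin s G where
  toFun v := some (c, v)
  inj' := (Option.some_injective _).comp (Prod.mk_right_injective c)
  map_rel_iff' := by simp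

@[simp]
theorem apexJoinCopy_apply (c : Fin (s + 1)) (v : V) : apexJoinCopy G c v = some (c, v) :=
  rfl

theorem apexJoin_subset_range_copy {A : Set (Option (Fin (s + 1) × V))}
    (hA : ((apexJoin s G).induce A).Preconnected) (hapex : none ∉ A) {c : Fin (s + 1)} {v : V}
    (hv : some (c, v) ∈ A) : A ⊆ Set.range (apexJoinCopy G c) := by
  have hcopy : ∀ a b : A, ((apexJoin s G).induce A).Adj a b →
      a.1.map Prod.fst = b.1.map Prod.fst := by
    rintro ⟨_ | p, ha⟩ ⟨_ | q, hb⟩ hab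
    exacts [absurd ha hapex, absurd ha hapex, absurd hb hapex, congrArg some hab.1]
  rintro (_ | ⟨c', u⟩) hu
  · exact absurd hu hapex
  · have := hA.eq_of_forall_adj hcopy ⟨_, hu⟩ ⟨_, hv⟩
    simp only [Option.map_some, Option.some.injEq] at this
    exact ⟨u, by rw [apexJoinCopy_apply, this]⟩

theorem IsCliqueModel.exists_subset_range_apexJoinCopy {n : ℕ}
    {f : Fin (n + 1) → Set (Option (Fin (s + 1) × V))} (hf : IsCliqueModel (apexJoin s G) f)
    (hapex : ∀ i, none ∉ f i) : ∃ c, ∀ i, f i ⊆ Set.range (apexJoinCopy G c) := by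
  obtain ⟨hne, hconn, -, hadj⟩ := hf
  have hsub : ∀ i {c v}, some (c, v) ∈ f i → f i ⊆ Set.range (apexJoinCopy G c) :=
    fun i _ _ => apexJoin_subset_range_copy (hconn i).preconnected (hapex i)
  obtain ⟨_ | ⟨c, v⟩, hv⟩ := hne 0
  · exact absurd hv (hapex 0)
  refine ⟨c, fun i => ?_⟩
  obtain rfl | hi := eq_or_ne i 0
  · exact hsub 0 hv
  obtain ⟨x, hx, y, hy, hxy⟩ := hadj i 0 hi
  obtain ⟨w, rfl⟩ := hsub 0 hv hy
  obtain _ | ⟨c', u⟩ := x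
  · exact absurd hx (hapex i)
  obtain ⟨rfl, -⟩ := hxy
  exact hsub i hx

theorem not_hasCompleteMinor_apexJoin {n : ℕ} (h : ¬ HasCompleteMinor G (n + 1)) :
    ¬ HasCompleteMinor (apexJoin s G) (n + 2) := by
  rw [hasCompleteMinor_iff]
  rintro ⟨f, hf⟩
  obtain ⟨i₀, hi₀⟩ := hf.exists_forall_ne_notMem none
  have hf' := hf.comp (Fin.succAbove_right_injective (p := i₀))
  obtain ⟨c, hc⟩ := hf'.exists_subset_range_apexJoinCopy fun i => hi₀ _ (Fin.succAbove_ne i₀ i)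
  exact h ⟨_, hf'.preimage (apexJoinCopy G c) hc⟩

theorem MaxDegWithinLE.exists_apexJoinCopy_preimage_eq_empty [Finite V]
    {A : Set (Option (Fin (s + 1) × V))} (h : MaxDegWithinLE (apexJoin s G) A s)
    (hapex : none ∈ A) :
    ∃ c, apexJoinCopy G c ⁻¹' A = ∅ := by
  by_contra! hmeet
  choose w hw using hmeet
  have hcard : (Set.univ : Set (Fin (s + 1))).ncard ≤ s := by
    refine le_trans (Set.ncard_le_ncard_of_injOn (fun c => some (c, w c)) ?_ ?_ ?_) (h none hapex)
    · exact fun c _ => ⟨hw c, trivial⟩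
    · intro c _ c' _ hcc'
      simp only [Option.some.injEq, Prod.mk.injEq] at hcc'
      exact hcc'.1
    · exact Set.toFinite _
  simp at hcard

theorem not_isDefectivePartition_apexJoin [Finite V] {k : ℕ}
    (h : ∀ X : Fin k → Set V, ¬ IsDefectivePartition G s X) (X : Fin (k + 1) → Set _) :
    ¬ IsDefectivePartition (apexJoin s G) s X := by
  intro hX
  obtain ⟨i₀, hi₀⟩ := Set.mem_iUnion.mp (hX.2.1 ▸ Set.mem_univ none)
  obtain ⟨c, hc⟩ := (hX.2.2 i₀).exists_apexJoinCopy_preimage_eq_empty hi₀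
  exact h _ ((hX.comap (apexJoinCopy G c)).comp_succAbove hc)

end ApexJoin

def IterApexJoinVertex (s : ℕ) : ℕ → Type
  | 0 => Unit
  | k + 1 => Option (Fin (s + 1) × IterApexJoinVertex s k)

instance IterApexJoinVertex.instFintype (s : ℕ) : (k : ℕ) → Fintype (IterApexJoinVertex s k)
  | 0 => inferInstanceAs (Fintype Unit)
  | k + 1 =>
    have := IterApexJoinVertex.instFintype s k
    inferInstanceAs (Fintype (Option (Fin (s + 1) × IterApexJoinVertex s k)))

def iterApexJoin (s : ℕ) : (k : ℕ) → SimpleGraph (IterApexJoinVertex s k)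
  | 0 => ⊥
  | k + 1 => apexJoin s (iterApexJoin s k)

theorem not_hasCompleteMinor_iterApexJoin (s : ℕ) :
    ∀ k, ¬ HasCompleteMinor (iterApexJoin s k) (k + 2)
  | 0 => by
    rintro ⟨f, -, -, -, hadj⟩
    obtain ⟨x, -, y, -, hxy⟩ := hadj 0 1 (by decide)
    exact hxy
  | k + 1 => not_hasCompleteMinor_apexJoin (not_hasCompleteMinor_iterApexJoin s k)

theorem not_isDefectivePartition_iterApexJoin (s : ℕ) :
    ∀ k (X : Fin k → Set (IterApexJoinVertex s k)), ¬ IsDefectivePartition (iterApexJoin s k) s X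
  | 0, _, ⟨_, hcover, _⟩ =>
    (Set.mem_iUnion.mp (hcover ▸ Set.mem_univ ())).elim fun i _ => i.elim0
  | k + 1, X, hX => not_isDefectivePartition_apexJoin
      (not_isDefectivePartition_iterApexJoin s k) X hX

/-- For all `s ≥ 0` and `t ≥ 1` there is a finite graph `G` with no `K_{t+1}` minor
admitting no partition of its vertex set into `t − 1` sets each inducing a subgraph
of maximum degree at most `s`. -/
theorem sharpness (s t : ℕ) (ht : 1 ≤ t) :
    ∃ (n : ℕ) (G : SimpleGraph (Fin n)),
      ¬ HasCompleteMinor G (t + 1) ∧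
      ¬ ∃ X : Fin (t - 1) → Set (Fin n),
          (Pairwise fun i j => Disjoint (X i) (X j)) ∧
          (⋃ i, X i) = Set.univ ∧
          ∀ i, MaxDegWithinLE G (X i) s := by
  obtain ⟨k, rfl⟩ : ∃ k, t = k + 1 := ⟨t - 1, by omega⟩
  let e := (iterApexJoin s k).overFinIso rfl
  refine ⟨_, _, fun h => not_hasCompleteMinor_iterApexJoin s k (h.of_iso e), ?_⟩
  rintro ⟨X, hX⟩
  exact not_isDefectivePartition_iterApexJoin s k _ (IsDefectivePartition.comap hX e.toEmbedding)
end

section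
/- There exists a real constant C > 0 such that for every integer t ≥ 0 and every finite simple graph G, if K_{t+1} is not a minor of G, then the number of edges of G is at most C·(t+1)·(log(t+1))^{1/2}·|V(G)|, where log denotes the natural logarithm. -/
/-!
Mader's argument: in a minor-minimal graph with more than `k = C t √(log t)` edges per vertex,
deleting an edge or a vertex of degree below `k`, or contracting an edge lying in at most `k - 1`
triangles, would preserve the density. So some minor has a vertex `v` of degree `d ∈ [k, 2k + 2]`
whose neighbourhood `Ω` induces a graph of minimum degree at least `d / 2 - 2`.

Inside `Ω` there is a set `D` with `|D| ≥ 0.4 d` and minimum degree `0.48 |D|` in which any two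
vertices of any `W ⊆ D` with `|W| ≥ 0.94 |D|` are joined by a path of length at most three through
`W`: either `D = Ω`, or `D` is one side of a pair of large anticomplete sets, and then has minimum
degree `0.7 |D|`.

In `D` the `K_{t+1}` minor is built greedily with `s ≈ √(log |D|)`. A branch set consists of a seed
of `s` vertices dominating all but a `0.55 ^ s`-fraction of the unused vertices, `2 s` vertices
adjacent to the seeds of all earlier branch sets (each greedy choice misses at most a `0.6 ^ s`-
fraction of the seeds still missed, and `t · 0.6 ^ (2 s²) < 1`), and short paths joining these
to a root.
Branch sets have `O(√(log |D|))` vertices, so `t + 1` of them fit into `D`.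
-/

open Finset

namespace Finset

/-- By averaging, some candidate misses at most a `c`-fraction of the targets missed so far. -/
theorem exists_greedy_cover {α β : Type*} [DecidableEq α] {P : Finset α}
    (hP : P.Nonempty) (T : Finset β) (hit : α → β → Prop) [∀ a b, Decidable (hit a b)] {c : ℝ}
    (hc : 0 ≤ c) (hmiss : ∀ t ∈ T, (#{a ∈ P | ¬ hit a t} : ℝ) ≤ c * #P) (m : ℕ) :
    ∃ S ⊆ P, #S ≤ m ∧ (#{t ∈ T | ∀ a ∈ S, ¬ hit a t} : ℝ) ≤ c ^ m * #T := by
  induction m with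
  | zero => exact ⟨∅, empty_subset _, le_rfl, by simp⟩
  | succ m ih =>
    obtain ⟨S, hSP, hSm, hS⟩ := ih
    set T' := {t ∈ T | ∀ a ∈ S, ¬ hit a t}
    have hdouble : ∑ a ∈ P, (#{t ∈ T' | ¬ hit a t} : ℝ) ≤ ∑ _a ∈ P, c * #T' := by
      have := sum_card_bipartiteAbove_eq_sum_card_bipartiteBelow (s := P) (t := T')
        (r := fun a t => ¬ hit a t)
      simp only [bipartiteAbove, bipartiteBelow] at this
      rw [← Nat.cast_sum, this, Nat.cast_sum, sum_const, nsmul_eq_mul]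
      calc ∑ t ∈ T', (#{a ∈ P | ¬ hit a t} : ℝ)
          ≤ ∑ _t ∈ T', c * #P := sum_le_sum fun t ht => hmiss t (filter_subset _ _ ht)
        _ = #P * (c * #T') := by rw [sum_const, nsmul_eq_mul]; ring
    obtain ⟨a, haP, ha⟩ := exists_le_of_sum_le hP hdouble
    refine ⟨insert a S, insert_subset haP hSP, (card_insert_le _ _).trans (by omega), ?_⟩
    have heq : {t ∈ T | ∀ b ∈ insert a S, ¬ hit b t} = {t ∈ T' | ¬ hit a t} := by
      ext t
      simp only [T', mem_filter, mem_insert, forall_eq_or_imp]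
      tauto
    rw [heq, pow_succ']
    calc (#{t ∈ T' | ¬ hit a t} : ℝ) ≤ c * #T' := ha
      _ ≤ c * (c ^ m * #T) := mul_le_mul_of_nonneg_left hS hc
      _ = c * c ^ m * #T := by ring

end Finset

lemma pow_six_tenths_le_inv {n : ℝ} (hn : 0 < n) {s : ℕ} (hs : Real.log n ≤ s * s) :
    (0.6 : ℝ) ^ (2 * s * s) ≤ n⁻¹ := by
  have h36 : (0.6 : ℝ) ^ 2 ≤ Real.exp (-1) := by
    rw [Real.exp_neg, le_inv_comm₀ (by norm_num) (Real.exp_pos 1)]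
    nlinarith [Real.exp_one_lt_d9]
  calc (0.6 : ℝ) ^ (2 * s * s) = ((0.6 : ℝ) ^ 2) ^ (s * s) := by rw [← pow_mul, mul_assoc]
    _ ≤ Real.exp (-1) ^ (s * s) := by gcongr
    _ = Real.exp (-(s * s)) := by rw [← Real.exp_nat_mul]; push_cast; ring_nf
    _ ≤ Real.exp (-Real.log n) := by gcongr
    _ = n⁻¹ := by rw [Real.exp_neg, Real.exp_log hn]

lemma mul_sqrt_log_add_one_le {u d : ℝ} (hu : 3 ≤ u) (hd : 0 < d)
    (hdu : d ≤ 30000000 * u * √(Real.log u)) :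
    1250 * u * (√(Real.log d) + 1) ≤ 10000000 * u * √(Real.log u) := by
  have hL : 1 ≤ Real.log u := by
    rw [Real.le_log_iff_exp_le (by linarith)]
    linarith [Real.exp_one_lt_d9]
  set σ := √(Real.log u)
  have hσ : 1 ≤ σ := Real.one_le_sqrt.2 hL
  have hσσ : σ * σ = Real.log u := Real.mul_self_sqrt (by linarith)
  have hσu : σ ≤ u := by nlinarith [Real.log_le_sub_one_of_pos (by linarith : (0 : ℝ) < u)]
  have h18 : Real.log 30000000 ≤ 18 := by
    rw [Real.log_le_iff_le_exp (by norm_num), show (18 : ℝ) = (18 : ℕ) by norm_num,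
      ← Real.exp_one_pow]
    calc (30000000 : ℝ) ≤ 2.7 ^ 18 := by norm_num
      _ ≤ Real.exp 1 ^ 18 := by gcongr; linarith [Real.exp_one_gt_d9]
  have hlogd : Real.log d ≤ 18 + 2 * Real.log u :=
    calc Real.log d ≤ Real.log (30000000 * u ^ 2) := Real.log_le_log hd (by nlinarith)
      _ = Real.log 30000000 + 2 * Real.log u := by
        rw [Real.log_mul (by norm_num) (by positivity), Real.log_pow]; push_cast; ring
      _ ≤ 18 + 2 * Real.log u := by linarith
  have hsqrt : √(Real.log d) ≤ 4.5 * σ := (Real.sqrt_le_left (by positivity)).2 (by nlinarith)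
  nlinarith

namespace SimpleGraph

variable {V : Type}

/-- Reachability in `G.induce B`, phrased on `V` itself so that no subtypes are involved. -/
def ReachIn (G : SimpleGraph V) (B : Set V) : V → V → Prop :=
  Relation.ReflTransGen fun a b => a ∈ B ∧ b ∈ B ∧ G.Adj a b

namespace ReachIn

variable {G G' : SimpleGraph V} {B B' : Set V} {x y z : V}

lemma single (hx : x ∈ B) (hy : y ∈ B) (h : G.Adj x y) : G.ReachIn B x y :=
  Relation.ReflTransGen.single ⟨hx, hy, h⟩

lemma head (hx : x ∈ B) (hy : y ∈ B) (h : G.Adj x y) (hyz : G.ReachIn B y z) :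
    G.ReachIn B x z :=
  Relation.ReflTransGen.head ⟨hx, hy, h⟩ hyz

lemma trans (hxy : G.ReachIn B x y) (hyz : G.ReachIn B y z) : G.ReachIn B x z :=
  Relation.ReflTransGen.trans hxy hyz

lemma mono (hG : G ≤ G') (hB : B ⊆ B') (h : G.ReachIn B x y) : G'.ReachIn B' x y :=
  Relation.ReflTransGen.mono (fun _ _ hab => ⟨hB hab.1, hB hab.2.1, hG hab.2.2⟩) _ _ h

lemma eq_of_isolated {v : V} (hv : ∀ w, ¬ G.Adj v w) (h : G.ReachIn B x y)
    (hxy : x = v ∨ y = v) : x = y := by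
  rcases hxy with rfl | rfl
  · rcases Relation.ReflTransGen.cases_head h with rfl | ⟨w, hw, -⟩
    · rfl
    · exact absurd hw.2.2 (hv w)
  · rcases Relation.ReflTransGen.cases_tail h with rfl | ⟨w, -, hw⟩
    · rfl
    · exact absurd hw.2.2.symm (hv w)

lemma notMem_of_isolated {v r : V} (hv : ∀ w, ¬ G.Adj v w) (hB : ∀ y ∈ B, G.ReachIn B y r)
    (hx : x ∈ B) (hxv : x ≠ v) : v ∉ B := fun hvB => by
  have hvr := (hB v hvB).eq_of_isolated hv (.inl rfl)
  exact hxv ((hB x hx).eq_of_isolated hv (.inr hvr.symm) |>.trans hvr.symm)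

lemma reachable_induce (h : G.ReachIn B x y) (hx : x ∈ B) (hy : y ∈ B) :
    (G.induce B).Reachable ⟨x, hx⟩ ⟨y, hy⟩ := by
  induction h using Relation.ReflTransGen.head_induction_on with
  | refl => rfl
  | head hab _ ih => exact (Adj.reachable (by simpa using hab.2.2)).trans (ih hab.2.1)

end ReachIn

/-- Branch sets are finsets, so that they can be counted, and their connectivity is witnessed by a
root; see `HasCompleteFinsetMinor.hasCompleteMinor`. -/
def HasCompleteFinsetMinor (G : SimpleGraph V) (n : ℕ) : Prop :=
  ∃ f : Fin n → Finset V,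
    (∀ i, ∃ r ∈ f i, ∀ x ∈ f i, G.ReachIn (f i) x r) ∧
    (Pairwise fun i j => Disjoint (f i) (f j)) ∧
    (Pairwise fun i j => ∃ x ∈ f i, ∃ y ∈ f j, G.Adj x y)

namespace HasCompleteFinsetMinor

variable {G G' : SimpleGraph V} {m n : ℕ}

lemma hasCompleteMinor (h : G.HasCompleteFinsetMinor n) : HasCompleteMinor G n := by
  obtain ⟨f, hroot, hdisj, hadj⟩ := h
  refine ⟨fun i => f i, fun i => ?_, fun i => ?_, fun i j hij => disjoint_coe.2 (hdisj hij),
    fun i j hij => hadj hij⟩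
  · obtain ⟨r, hr, -⟩ := hroot i
    exact ⟨r, hr⟩
  · obtain ⟨r, hr, hreach⟩ := hroot i
    have : Nonempty (f i : Set V) := ⟨⟨r, hr⟩⟩
    refine ⟨fun a b => ?_⟩
    exact ((hreach a a.2).reachable_induce a.2 hr).trans
      ((hreach b b.2).reachable_induce b.2 hr).symm

lemma mono (hG : G ≤ G') (h : G.HasCompleteFinsetMinor n) : G'.HasCompleteFinsetMinor n := by
  obtain ⟨f, hroot, hdisj, hadj⟩ := h
  refine ⟨f, fun i => ?_, hdisj, fun i j hij => ?_⟩
  · obtain ⟨r, hr, hreach⟩ := hroot i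
    exact ⟨r, hr, fun x hx => (hreach x hx).mono hG le_rfl⟩
  · obtain ⟨x, hx, y, hy, hxy⟩ := hadj hij
    exact ⟨x, hx, y, hy, hG hxy⟩

lemma of_le (hmn : m ≤ n) (h : G.HasCompleteFinsetMinor n) : G.HasCompleteFinsetMinor m := by
  obtain ⟨f, hroot, hdisj, hadj⟩ := h
  have hinj : Function.Injective (Fin.castLE hmn) := Fin.castLE_injective hmn
  exact ⟨f ∘ Fin.castLE hmn, fun i => hroot _, fun i j hij => hdisj (hinj.ne hij),
    fun i j hij => hadj (hinj.ne hij)⟩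

end HasCompleteFinsetMinor

lemma hasCompleteFinsetMinor_two_of_adj {G : SimpleGraph V} {x y : V} (h : G.Adj x y) :
    G.HasCompleteFinsetMinor 2 := by
  refine ⟨![{x}, {y}], fun i => ?_, fun i j hij => ?_, fun i j hij => ?_⟩
  · fin_cases i <;> exact ⟨_, mem_singleton_self _, fun z hz => by
      rw [mem_singleton.1 hz]; exact Relation.ReflTransGen.refl⟩
  · fin_cases i <;> fin_cases j <;> simp_all [h.ne, h.ne.symm]
  · fin_cases i <;> fin_cases j <;> simp_all [h.symm]

/-! ### Edge contraction -/

section Contraction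

/-- Contraction of the edge `uv` into `u` on the same vertex type: `v` becomes isolated and
`u` inherits its neighbours. -/
def contractEdge (G : SimpleGraph V) (u v : V) : SimpleGraph V where
  Adj a b := a ≠ b ∧ a ≠ v ∧ b ≠ v ∧
    (G.Adj a b ∨ (a = u ∧ G.Adj v b) ∨ (b = u ∧ G.Adj a v))
  symm := ⟨by
    rintro a b ⟨hab, ha, hb, h | ⟨rfl, h⟩ | ⟨rfl, h⟩⟩
    · exact ⟨hab.symm, hb, ha, Or.inl h.symm⟩
    · exact ⟨hab.symm, hb, ha, Or.inr (Or.inr ⟨rfl, h.symm⟩)⟩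
    · exact ⟨hab.symm, hb, ha, Or.inr (Or.inl ⟨rfl, h.symm⟩)⟩⟩
  loopless := ⟨fun _ h => h.1 rfl⟩

variable {G : SimpleGraph V} {u v : V}

lemma contractEdge_adj {a b : V} : (G.contractEdge u v).Adj a b ↔ a ≠ b ∧ a ≠ v ∧ b ≠ v ∧
    (G.Adj a b ∨ (a = u ∧ G.Adj v b) ∨ (b = u ∧ G.Adj a v)) := Iff.rfl

instance [DecidableEq V] [DecidableRel G.Adj] : DecidableRel (G.contractEdge u v).Adj :=
  fun _ _ => decidable_of_iff' _ contractEdge_adj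

lemma support_contractEdge_subset (huv : G.Adj u v) :
    (G.contractEdge u v).support ⊆ G.support \ {v} := by
  rintro a ⟨b, hab⟩
  obtain ⟨-, hav, -, h | ⟨rfl, -⟩ | ⟨rfl, h⟩⟩ := contractEdge_adj.1 hab
  exacts [⟨⟨b, h⟩, hav⟩, ⟨⟨v, huv⟩, hav⟩, ⟨⟨v, h⟩, hav⟩]

lemma ReachIn.of_contractEdge {B B' : Set V} {x y : V} (huv : G.Adj u v) (hB : B ⊆ B')
    (hv : u ∈ B → v ∈ B') (h : (G.contractEdge u v).ReachIn B x y) : G.ReachIn B' x y := by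
  induction h with
  | refl => exact .refl
  | tail _ hbc ih =>
    obtain ⟨hb, hc, hbc⟩ := hbc
    obtain ⟨-, -, -, h | ⟨rfl, h⟩ | ⟨rfl, h⟩⟩ := contractEdge_adj.1 hbc
    · exact ih.trans (.single (hB hb) (hB hc) h)
    · exact ih.trans (.head (hB hb) (hv hb) huv (.single (hv hb) (hB hc) h))
    · exact ih.trans (.head (hB hb) (hv hc) h (.single (hv hc) (hB hc) huv.symm))

lemma HasCompleteFinsetMinor.of_contractEdge [DecidableEq V] {n : ℕ} (huv : G.Adj u v)
    (hn : 2 ≤ n) (h : (G.contractEdge u v).HasCompleteFinsetMinor n) :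
    G.HasCompleteFinsetMinor n := by
  obtain ⟨f, hroot, hdisj, hadj⟩ := h
  -- `v` is isolated after contracting, while every branch set contains a non-isolated vertex.
  have hv : ∀ i, v ∉ f i := by
    intro i
    have : Nontrivial (Fin n) := Fin.nontrivial_iff_two_le.2 hn
    obtain ⟨j, hji⟩ := exists_ne i
    obtain ⟨r, -, hreach⟩ := hroot i
    obtain ⟨x, hx, _, _, hxy⟩ := hadj hji.symm
    exact ReachIn.notMem_of_isolated (fun w h => (contractEdge_adj.1 h).2.1 rfl) hreach hx
      (contractEdge_adj.1 hxy).2.1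
  set g : Fin n → Finset V := fun i => if u ∈ f i then insert v (f i) else f i
  have mem_g : ∀ i z, z ∈ g i ↔ z ∈ f i ∨ (z = v ∧ u ∈ f i) := by
    intro i z
    by_cases hu : u ∈ f i <;> simp [g, hu, or_comm]
  have lift : ∀ i x y, (G.contractEdge u v).ReachIn (f i) x y → G.ReachIn (g i) x y :=
    fun i x y => ReachIn.of_contractEdge huv (fun z hz => (mem_g i z).2 (.inl hz))
      fun hu => (mem_g i v).2 (.inr ⟨rfl, hu⟩)
  refine ⟨g, fun i => ?_, fun i j hij => ?_, fun i j hij => ?_⟩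
  · obtain ⟨r, hr, hreach⟩ := hroot i
    refine ⟨r, (mem_g i r).2 (.inl hr), fun x hx => ?_⟩
    rcases (mem_g i x).1 hx with hx | ⟨rfl, hu⟩
    · exact lift i x r (hreach x hx)
    · exact .head hx ((mem_g i u).2 (.inl hu)) huv.symm (lift i u r (hreach u hu))
  · refine Finset.disjoint_left.2 fun z hzi hzj => ?_
    rcases (mem_g i z).1 hzi with hzi | ⟨rfl, hui⟩ <;>
      rcases (mem_g j z).1 hzj with hzj | ⟨hzv, huj⟩
    · exact Finset.disjoint_left.1 (hdisj hij) hzi hzj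
    · exact hv i (hzv ▸ hzi)
    · exact hv j hzj
    · exact Finset.disjoint_left.1 (hdisj hij) hui huj
  · obtain ⟨x, hx, y, hy, hxy⟩ := hadj hij
    obtain ⟨-, -, -, h | ⟨rfl, h⟩ | ⟨rfl, h⟩⟩ := contractEdge_adj.1 hxy
    · exact ⟨x, (mem_g i x).2 (.inl hx), y, (mem_g j y).2 (.inl hy), h⟩
    · exact ⟨v, (mem_g i v).2 (.inr ⟨rfl, hx⟩), y, (mem_g j y).2 (.inl hy), h⟩
    · exact ⟨x, (mem_g i x).2 (.inl hx), v, (mem_g j v).2 (.inr ⟨rfl, hy⟩), h⟩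

variable [Fintype V] [DecidableEq V] [DecidableRel G.Adj]

lemma edgeFinset_contractEdge (huv : G.Adj u v) :
    (G.contractEdge u v).edgeFinset = (G.deleteIncidenceSet v).edgeFinset ∪
      (G.neighborFinset v \ insert u (G.neighborFinset u)).image (s(·, u)) := by
  ext e
  induction e using Sym2.ind with
  | _ a b =>
  simp only [mem_union, mem_image, mem_sdiff, mem_insert, mem_neighborFinset, mem_edgeFinset,
    mem_edgeSet, contractEdge_adj, deleteIncidenceSet_adj, Sym2.eq_iff]
  constructor
  · rintro ⟨hab, hav, hbv, h | ⟨rfl, h⟩ | ⟨rfl, h⟩⟩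
    · exact .inl ⟨h, hav, hbv⟩
    · by_cases hub : G.Adj a b
      · exact .inl ⟨hub, hav, hbv⟩
      · exact .inr ⟨b, ⟨h, by tauto⟩, .inr ⟨rfl, rfl⟩⟩
    · by_cases hub : G.Adj a b
      · exact .inl ⟨hub, hav, hbv⟩
      · exact .inr ⟨a, ⟨h.symm, by tauto⟩, .inl ⟨rfl, rfl⟩⟩
  · rintro (⟨h, hav, hbv⟩ | ⟨c, ⟨hvc, hcu⟩, ⟨rfl, rfl⟩ | ⟨rfl, rfl⟩⟩)
    · exact ⟨h.ne, hav, hbv, .inl h⟩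
    · exact ⟨by tauto, hvc.ne', huv.ne, .inr (.inr ⟨rfl, hvc.symm⟩)⟩
    · exact ⟨by tauto, huv.ne, hvc.ne', .inr (.inl ⟨rfl, hvc⟩)⟩

lemma card_edgeFinset_contractEdge_add_degree (huv : G.Adj u v) :
    #(G.contractEdge u v).edgeFinset + G.degree v =
      #G.edgeFinset + #(G.neighborFinset v \ insert u (G.neighborFinset u)) := by
  have hdisj : Disjoint (G.deleteIncidenceSet v).edgeFinset
      ((G.neighborFinset v \ insert u (G.neighborFinset u)).image (s(·, u))) := by
    refine Finset.disjoint_left.2 fun e he he' => ?_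
    obtain ⟨c, hc, rfl⟩ := mem_image.1 he'
    simp only [mem_edgeFinset, mem_edgeSet, deleteIncidenceSet_adj] at he
    simp only [mem_sdiff, mem_insert, mem_neighborFinset] at hc
    exact hc.2 (.inr he.1.symm)
  have hinj : Set.InjOn (s(·, u)) ↑(G.neighborFinset v \ insert u (G.neighborFinset u)) := by
    intro a ha b hb hab
    simp only [coe_sdiff, coe_insert, Set.mem_sdiff, Set.mem_insert_iff] at ha
    rcases Sym2.eq_iff.1 hab with ⟨h, -⟩ | ⟨h, -⟩
    exacts [h, absurd (.inl h) ha.2]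
  rw [edgeFinset_contractEdge huv, card_union_of_disjoint hdisj, card_image_of_injOn hinj,
    card_edgeFinset_deleteIncidenceSet]
  have : G.degree v ≤ #G.edgeFinset := by
    rw [← card_incidenceFinset_eq_degree]
    exact card_le_card (incidenceFinset_subset G v)
  omega

lemma card_edgeFinset_contractEdge_le (huv : G.Adj u v) :
    #(G.contractEdge u v).edgeFinset ≤ #G.edgeFinset := by
  have := card_edgeFinset_contractEdge_add_degree huv
  have : #(G.neighborFinset v \ insert u (G.neighborFinset u)) ≤ G.degree v :=
    card_le_card sdiff_subset
  omega

lemma card_edgeFinset_le_contractEdge (huv : G.Adj u v) :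
    #G.edgeFinset ≤
      #(G.contractEdge u v).edgeFinset + 1 + #(G.neighborFinset u ∩ G.neighborFinset v) := by
  have := card_edgeFinset_contractEdge_add_degree huv
  have hsub : G.neighborFinset v ⊆ (G.neighborFinset v \ insert u (G.neighborFinset u)) ∪
      insert u (G.neighborFinset u ∩ G.neighborFinset v) := by
    intro z hz
    by_cases hzu : z ∈ insert u (G.neighborFinset u)
    · rcases mem_insert.1 hzu with rfl | hzu
      · exact mem_union_right _ (mem_insert_self _ _)
      · exact mem_union_right _ (mem_insert_of_mem (mem_inter.2 ⟨hzu, hz⟩))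
    · exact mem_union_left _ (mem_sdiff.2 ⟨hz, hzu⟩)
  have := (card_le_card hsub).trans (card_union_le _ _)
  have := card_insert_le u (G.neighborFinset u ∩ G.neighborFinset v)
  rw [card_neighborFinset_eq_degree] at *
  omega

end Contraction

/-! ### Mader's reduction -/

section Reduction

variable [Fintype V]

lemma ncard_support_lt_of_subset {G H : SimpleGraph V} {v : V} (hv : v ∈ G.support)
    (h : H.support ⊆ G.support \ {v}) : H.support.ncard < G.support.ncard := by
  refine (Set.ncard_le_ncard h (Set.toFinite _)).trans_lt ?_
  rw [Set.ncard_sdiff_singleton_of_mem hv]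
  exact Nat.sub_lt ((Set.ncard_pos (Set.toFinite _)).2 ⟨v, hv⟩) one_pos

lemma ncard_support_le_sub_one {G H : SimpleGraph V} {v : V} (hv : v ∈ G.support)
    (h : H.support ⊆ G.support \ {v}) : (H.support.ncard : ℝ) ≤ G.support.ncard - 1 := by
  rw [le_sub_iff_add_le]
  exact_mod_cast ncard_support_lt_of_subset hv h

lemma exists_mem_support_card_mul_degree_le (G : SimpleGraph V) [DecidableRel G.Adj]
    (h : G.support.Nonempty) :
    ∃ v ∈ G.support, G.support.ncard * G.degree v ≤ 2 * #G.edgeFinset := by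
  classical
  have hsum : ∑ v ∈ G.support.toFinset, G.degree v = 2 * #G.edgeFinset := by
    rw [← sum_degrees_eq_twice_card_edges]
    refine sum_subset (subset_univ _) fun v _ hv => ?_
    rw [degree_eq_zero_iff_notMem_support]
    simpa using hv
  obtain ⟨v, hv, hle⟩ := exists_le_of_sum_le (f := fun v => G.support.ncard * G.degree v)
    (g := fun _ => 2 * #G.edgeFinset) (Set.toFinset_nonempty.2 h) (by
      rw [← mul_sum, hsum, sum_const, smul_eq_mul, Set.ncard_eq_toFinset_card'])
  exact ⟨v, Set.mem_toFinset.1 hv, hle⟩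

variable [DecidableEq V] {G : SimpleGraph V} [DecidableRel G.Adj] {k : ℝ}

lemma density_deleteEdges_singleton (hk : 0 ≤ k) {e : Sym2 V} (he : e ∈ G.edgeFinset)
    (hG : k * G.support.ncard + 1 < #G.edgeFinset) :
    k * (G.deleteEdges {e}).support.ncard < #(G.deleteEdges {e}).edgeFinset ∧
      #(G.deleteEdges {e}).edgeFinset + (G.deleteEdges {e}).support.ncard <
        #G.edgeFinset + G.support.ncard := by
  have hcard : #(G.deleteEdges {e}).edgeFinset + 1 = #G.edgeFinset := by
    rw [← card_erase_add_one he]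
    congr 2
    ext x
    simp [edgeSet_deleteEdges, and_comm]
  have hsupp := Set.ncard_le_ncard (support_mono (G.deleteEdges_le {e})) (Set.toFinite _)
  refine ⟨?_, by omega⟩
  have hcard' : (#(G.deleteEdges {e}).edgeFinset : ℝ) + 1 = #G.edgeFinset := by exact_mod_cast hcard
  have hsupp' : ((G.deleteEdges {e}).support.ncard : ℝ) ≤ G.support.ncard := by exact_mod_cast hsupp
  nlinarith

lemma density_deleteIncidenceSet (hG : k * G.support.ncard < #G.edgeFinset) {v : V}
    (hv : v ∈ G.support) (hdeg : G.degree v < k) :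
    k * (G.deleteIncidenceSet v).support.ncard < #(G.deleteIncidenceSet v).edgeFinset ∧
      #(G.deleteIncidenceSet v).edgeFinset + (G.deleteIncidenceSet v).support.ncard <
        #G.edgeFinset + G.support.ncard := by
  have hdeg_le : G.degree v ≤ #G.edgeFinset := by
    rw [← card_incidenceFinset_eq_degree]
    exact card_le_card (incidenceFinset_subset G v)
  have hsub := G.support_deleteIncidenceSet_subset v
  rw [card_edgeFinset_deleteIncidenceSet]
  refine ⟨?_, by have := ncard_support_lt_of_subset hv hsub; omega⟩
  rw [Nat.cast_sub hdeg_le]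
  nlinarith [ncard_support_le_sub_one hv hsub]

lemma density_contractEdge (hG : k * G.support.ncard < #G.edgeFinset) {a b : V} (hab : G.Adj a b)
    (hcommon : (#(G.neighborFinset a ∩ G.neighborFinset b) : ℝ) ≤ k - 1) :
    k * (G.contractEdge a b).support.ncard < #(G.contractEdge a b).edgeFinset ∧
      #(G.contractEdge a b).edgeFinset + (G.contractEdge a b).support.ncard <
        #G.edgeFinset + G.support.ncard := by
  have hsub := support_contractEdge_subset hab
  have hb : b ∈ G.support := ⟨a, hab.symm⟩
  have hlow : (#G.edgeFinset : ℝ) ≤ #(G.contractEdge a b).edgeFinset + 1 +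
      #(G.neighborFinset a ∩ G.neighborFinset b) := by
    exact_mod_cast card_edgeFinset_le_contractEdge hab
  refine ⟨?_, by
    have := ncard_support_lt_of_subset hb hsub
    have := card_edgeFinset_contractEdge_le hab
    omega⟩
  have hk : 0 ≤ k := by nlinarith
  nlinarith [ncard_support_le_sub_one hb hsub]

theorem minorClosed_of_dense_neighborhood {P : SimpleGraph V → Prop}
    (hP_mono : ∀ ⦃H G : SimpleGraph V⦄, H ≤ G → P H → P G)
    (hP_contract : ∀ ⦃G : SimpleGraph V⦄ ⦃u v : V⦄, G.Adj u v → P (G.contractEdge u v) → P G)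
    (hk : 0 ≤ k)
    (hP_dense : ∀ (H : SimpleGraph V) [DecidableRel H.Adj] (v : V), k ≤ H.degree v →
      H.degree v ≤ 2 * k + 2 →
      (∀ x ∈ H.neighborFinset v, k - 1 < #(H.neighborFinset x ∩ H.neighborFinset v)) → P H)
    (G : SimpleGraph V) [DecidableRel G.Adj] (hG : k * G.support.ncard < #G.edgeFinset) :
    P G := by
  induction hm : #G.edgeFinset + G.support.ncard using Nat.strong_induction_on
    generalizing G with
  | _ m ih =>
  subst hm
  obtain ⟨e, he⟩ : G.edgeFinset.Nonempty := by
    have : (0 : ℝ) < #G.edgeFinset := (by positivity : (0 : ℝ) ≤ k * _).trans_lt hG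
    exact card_pos.1 (by exact_mod_cast this)
  by_cases hA : k * G.support.ncard + 1 < #G.edgeFinset
  · obtain ⟨hdense, hlt⟩ := density_deleteEdges_singleton hk he hA
    exact hP_mono (deleteEdges_le _) (ih _ hlt _ hdense rfl)
  by_cases hB : ∃ v ∈ G.support, G.degree v < k
  · obtain ⟨v, hv, hdeg⟩ := hB
    obtain ⟨hdense, hlt⟩ := density_deleteIncidenceSet hG hv hdeg
    exact hP_mono (deleteIncidenceSet_le G v) (ih _ hlt _ hdense rfl)
  by_cases hC : ∃ a b, G.Adj a b ∧ (#(G.neighborFinset a ∩ G.neighborFinset b) : ℝ) ≤ k - 1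
  · obtain ⟨a, b, hab, hcommon⟩ := hC
    obtain ⟨hdense, hlt⟩ := density_contractEdge hG hab hcommon
    exact hP_contract hab (ih _ hlt _ hdense rfl)
  push Not at hA hB hC
  have hsupp : G.support.Nonempty := by
    induction e using Sym2.ind with
    | _ a b => exact ⟨a, b, by simpa using he⟩
  obtain ⟨v, hv, hvdeg⟩ := exists_mem_support_card_mul_degree_le G hsupp
  have hn : (1 : ℝ) ≤ G.support.ncard := by exact_mod_cast hsupp.ncard_pos
  have hvdeg' : (G.support.ncard : ℝ) * G.degree v ≤ 2 * #G.edgeFinset := by exact_mod_cast hvdeg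
  refine hP_dense G v (hB v hv) ?_ fun x hx => hC x v ((mem_neighborFinset _ _ _).1 hx).symm
  nlinarith

end Reduction

/-! ### Greedy construction of the branch sets -/

section Greedy

variable (G : SimpleGraph V)

def JoinedWithin (W : Finset V) (x y : V) : Prop :=
  G.Adj x y ∨ (∃ p ∈ W, G.Adj x p ∧ G.Adj p y) ∨
    ∃ p ∈ W, ∃ q ∈ W, G.Adj x p ∧ G.Adj p q ∧ G.Adj q y

section

variable {G} [DecidableEq V]

lemma JoinedWithin.exists_reachIn {W : Finset V} {c r : V} (h : G.JoinedWithin W c r)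
    (hc : c ∈ W) (hr : r ∈ W) :
    ∃ B ⊆ W, c ∈ B ∧ r ∈ B ∧ #B ≤ 4 ∧ ∀ x ∈ B, G.ReachIn B x r := by
  rcases h with h | ⟨p, hp, hcp, hpr⟩ | ⟨p, hp, q, hq, hcp, hpq, hqr⟩
  · refine ⟨{c, r}, by simp [insert_subset_iff, hc, hr], by simp, by simp,
      (card_le_two).trans (by norm_num), ?_⟩
    simp only [mem_insert, mem_singleton, forall_eq_or_imp, forall_eq]
    exact ⟨.single (by simp) (by simp) h, .refl⟩
  · refine ⟨{c, p, r}, by simp [insert_subset_iff, hc, hp, hr], by simp, by simp,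
      (card_le_three).trans (by norm_num), ?_⟩
    simp only [mem_insert, mem_singleton, forall_eq_or_imp, forall_eq]
    have hp' : G.ReachIn ({c, p, r} : Finset V) p r := .single (by simp) (by simp) hpr
    exact ⟨.head (by simp) (by simp) hcp hp', hp', .refl⟩
  · refine ⟨{c, p, q, r}, by simp [insert_subset_iff, hc, hp, hq, hr], by simp, by simp,
      (card_le_four).trans le_rfl, ?_⟩
    simp only [mem_insert, mem_singleton, forall_eq_or_imp, forall_eq]
    have hq' : G.ReachIn ({c, p, q, r} : Finset V) q r := .single (by simp) (by simp) hqr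
    have hp' : G.ReachIn ({c, p, q, r} : Finset V) p r := .head (by simp) (by simp) hpq hq'
    exact ⟨.head (by simp) (by simp) hcp hp', hp', hq', .refl⟩

lemma exists_rooted_superset {P : Finset V} {r : V} (hr : r ∈ P)
    (hJ : ∀ c ∈ P, c ≠ r → G.JoinedWithin P c r) {core : Finset V} (hcore : core ⊆ P) :
    ∃ B ⊆ P, core ⊆ B ∧ r ∈ B ∧ #B ≤ 3 * #core + 1 ∧ ∀ x ∈ B, G.ReachIn B x r := by
  induction core using Finset.induction_on with
  | empty =>
    refine ⟨{r}, by simpa using hr, empty_subset _, mem_singleton_self r, by simp, ?_⟩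
    simp only [mem_singleton, forall_eq]
    exact .refl
  | @insert c core hc ih =>
    obtain ⟨B, hBP, hcoreB, hrB, hBcard, hB⟩ := ih ((subset_insert c core).trans hcore)
    have hcP : c ∈ P := hcore (mem_insert_self c core)
    rw [card_insert_of_notMem hc]
    by_cases hcr : c = r
    · exact ⟨B, hBP, insert_subset (hcr ▸ hrB) hcoreB, hrB, by omega, hB⟩
    obtain ⟨B', hB'P, hcB', hrB', hB'card, hB'⟩ := (hJ c hcP hcr).exists_reachIn hcP hr
    refine ⟨B ∪ B', union_subset hBP hB'P, insert_subset (mem_union_right _ hcB')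
      (hcoreB.trans subset_union_left), mem_union_left _ hrB, ?_, ?_⟩
    · have := card_union_add_card_inter B B'
      have : 1 ≤ #(B ∩ B') := card_pos.2 ⟨r, mem_inter.2 ⟨hrB, hrB'⟩⟩
      omega
    · simp only [mem_union]
      rintro x (hx | hx)
      exacts [(hB x hx).mono le_rfl (by simp), (hB' x hx).mono le_rfl (by simp)]

end

variable [DecidableRel G.Adj]

def MinDegWithinGE (X : Finset V) (d : ℝ) : Prop :=
  ∀ v ∈ X, d ≤ #{u ∈ X | G.Adj v u}

def IsRobustlyLinked (Ω : Finset V) : Prop :=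
  ∀ W ⊆ Ω, 0.94 * (#Ω : ℝ) ≤ #W → ∀ x ∈ W, ∀ y ∈ W, x ≠ y → G.JoinedWithin W x y

/-- `S` is the seed of the branch set `B`: the branch sets built later, in what remains of the
pool `P`, only need to contain a neighbour of `S`. -/
structure IsBlock (Ω P S B : Finset V) (s : ℕ) : Prop where
  seed_subset : S ⊆ B
  subset_pool : B ⊆ P
  card_le : #B ≤ 10 * s
  rooted : ∃ r ∈ B, ∀ x ∈ B, G.ReachIn B x r
  dominating : (#{q ∈ P | ∀ x ∈ S, ¬ G.Adj x q} : ℝ) ≤ 0.55 ^ s * #Ω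

variable {G}

lemma card_filter_not_adj_le {Ω P : Finset V} {δ : ℝ} (hdeg : G.MinDegWithinGE Ω (δ * #Ω))
    (hPΩ : P ⊆ Ω) {q : V} (hq : q ∈ Ω) : (#{a ∈ P | ¬ G.Adj a q} : ℝ) ≤ (1 - δ) * #Ω := by
  have hsub : {a ∈ P | ¬ G.Adj a q} ⊆ {a ∈ Ω | ¬ G.Adj q a} :=
    fun a ha => by
      simp only [mem_filter] at ha ⊢
      exact ⟨hPΩ ha.1, fun h => ha.2 h.symm⟩
  have hsplit := card_filter_add_card_filter_not (s := Ω) (G.Adj q)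
  have h1 : (#{a ∈ P | ¬ G.Adj a q} : ℝ) ≤ #{a ∈ Ω | ¬ G.Adj q a} := by
    exact_mod_cast card_le_card hsub
  have h2 : (#{a ∈ Ω | G.Adj q a} : ℝ) + #{a ∈ Ω | ¬ G.Adj q a} = #Ω := by exact_mod_cast hsplit
  linarith [hdeg q hq]

variable [DecidableEq V]

lemma exists_dominating_subset {Ω P : Finset V} (hdeg : G.MinDegWithinGE Ω (0.48 * #Ω))
    (hPΩ : P ⊆ Ω) (hP : 0.96 * (#Ω : ℝ) ≤ #P) (hPne : P.Nonempty) (s : ℕ) :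
    ∃ S ⊆ P, #S ≤ s ∧ (#{q ∈ P | ∀ x ∈ S, ¬ G.Adj x q} : ℝ) ≤ 0.55 ^ s * #Ω := by
  obtain ⟨S, hSP, hScard, hS⟩ := exists_greedy_cover hPne P G.Adj (c := 0.55) (by norm_num)
    (fun q hq => by linarith [card_filter_not_adj_le hdeg hPΩ (hPΩ hq)]) s
  have : (#P : ℝ) ≤ #Ω := by exact_mod_cast card_le_card hPΩ
  exact ⟨S, hSP, hScard, hS.trans (by gcongr)⟩

lemma exists_subset_adj_seeds {Ω P : Finset V} {s i : ℕ} (hs : 1 ≤ s) (hP : 0.96 * (#Ω : ℝ) ≤ #P)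
    (hPne : P.Nonempty) (S : ℕ → Finset V)
    (hS : ∀ j < i, (#{q ∈ P | ∀ x ∈ S j, ¬ G.Adj x q} : ℝ) ≤ 0.55 ^ s * #Ω)
    (hi : i * (0.6 : ℝ) ^ (2 * s * s) < 1) :
    ∃ T ⊆ P, #T ≤ 2 * s ∧ ∀ j < i, ∃ c ∈ T, ∃ x ∈ S j, G.Adj x c := by
  have hpow : (0.55 : ℝ) ^ s ≤ 0.96 * 0.6 ^ s := by
    have h : (0.55 / 0.6 : ℝ) ^ s ≤ 0.55 / 0.6 :=
      pow_le_of_le_one (by norm_num) (by norm_num) (by omega)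
    rw [div_pow, div_le_iff₀ (by positivity)] at h
    nlinarith [pow_pos (by norm_num : (0 : ℝ) < 0.6) s]
  obtain ⟨T, hTP, hTcard, hT⟩ := exists_greedy_cover hPne (range i)
    (fun a j => ∃ x ∈ S j, G.Adj x a) (c := 0.6 ^ s) (by positivity) (fun j hj => by
      simp only [not_exists, not_and]
      calc _ ≤ (0.55 : ℝ) ^ s * #Ω := hS j (mem_range.1 hj)
        _ ≤ 0.96 * 0.6 ^ s * #Ω := by gcongr
        _ ≤ 0.6 ^ s * #P := by nlinarith [pow_pos (by norm_num : (0 : ℝ) < 0.6) s]) (2 * s)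
  rw [← pow_mul, mul_comm s, card_range] at hT
  have hzero : #{j ∈ range i | ∀ a ∈ T, ¬ ∃ x ∈ S j, G.Adj x a} = 0 := by
    have : (#{j ∈ range i | ∀ a ∈ T, ¬ ∃ x ∈ S j, G.Adj x a} : ℝ) < 1 := by linarith
    exact_mod_cast Nat.lt_one_iff.1 (by exact_mod_cast this)
  refine ⟨T, hTP, hTcard, fun j hj => ?_⟩
  simpa using filter_eq_empty_iff.1 (card_eq_zero.1 hzero) (mem_range.2 hj)

lemma exists_block {Ω P : Finset V} {s i : ℕ} (hs : 1 ≤ s)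
    (hdeg : G.MinDegWithinGE Ω (0.48 * #Ω)) (hlink : G.IsRobustlyLinked Ω) (hΩ : Ω.Nonempty)
    (hPΩ : P ⊆ Ω) (hP : 0.96 * (#Ω : ℝ) ≤ #P) (S : ℕ → Finset V)
    (hS : ∀ j < i, (#{q ∈ P | ∀ x ∈ S j, ¬ G.Adj x q} : ℝ) ≤ 0.55 ^ s * #Ω)
    (hi : i * (0.6 : ℝ) ^ (2 * s * s) < 1) :
    ∃ Snew B, G.IsBlock Ω P Snew B s ∧ ∀ j < i, ∃ c ∈ B, ∃ x ∈ S j, G.Adj x c := by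
  have hΩpos : (0 : ℝ) < #Ω := by exact_mod_cast hΩ.card_pos
  obtain ⟨r, hr⟩ : P.Nonempty := card_pos.1 (by
    have : (0 : ℝ) < #P := hP.trans_lt' (by positivity)
    exact_mod_cast this)
  obtain ⟨Snew, hSP, hScard, hSdom⟩ := exists_dominating_subset hdeg hPΩ hP ⟨r, hr⟩ s
  obtain ⟨T, hTP, hTcard, hT⟩ := exists_subset_adj_seeds hs hP ⟨r, hr⟩ S hS hi
  obtain ⟨B, hBP, hcoreB, hrB, hBcard, hB⟩ := exists_rooted_superset hr
    (fun c hc hcr => hlink P hPΩ (by linarith) c hc r hr hcr) (union_subset hSP hTP)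
  refine ⟨Snew, B, ⟨subset_union_left.trans hcoreB, hBP, ?_, ⟨r, hrB, hB⟩, hSdom⟩,
    fun j hj => ?_⟩
  · have := card_union_le Snew T
    omega
  · obtain ⟨c, hc, hx⟩ := hT j hj
    exact ⟨c, hcoreB (mem_union_right _ hc), hx⟩

variable (G) in
def IsBlockSequence (Ω : Finset V) (s i : ℕ) (B S : ℕ → Finset V) : Prop :=
  (∀ j < i, G.IsBlock Ω (Ω \ (range j).biUnion B) (S j) (B j) s) ∧
  ∀ j l, j < l → l < i → ∃ c ∈ B l, ∃ x ∈ S j, G.Adj x c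

variable {Ω : Finset V} {s i : ℕ} {B S : ℕ → Finset V}

lemma IsBlockSequence.card_le_card_pool (h : G.IsBlockSequence Ω s i B S) :
    (#Ω : ℝ) ≤ #(Ω \ (range i).biUnion B) + i * (10 * s) := by
  have hunion : #((range i).biUnion B) ≤ i * (10 * s) := by
    refine card_biUnion_le.trans ?_
    simpa using sum_le_card_nsmul (range i) (fun j => #(B j)) (10 * s)
      fun j hj => (h.1 j (mem_range.1 hj)).card_le
  have : #Ω ≤ #(Ω \ (range i).biUnion B) + #((range i).biUnion B) := by
    rw [← card_sdiff_add_card_inter Ω ((range i).biUnion B)]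
    exact Nat.add_le_add_left (card_le_card inter_subset_right) _
  exact_mod_cast this.trans (by omega)

lemma IsBlockSequence.card_filter_pool_le (h : G.IsBlockSequence Ω s i B S) {j : ℕ} (hj : j < i) :
    (#{q ∈ Ω \ (range i).biUnion B | ∀ x ∈ S j, ¬ G.Adj x q} : ℝ) ≤ 0.55 ^ s * #Ω := by
  have hsub : Ω \ (range i).biUnion B ⊆ Ω \ (range j).biUnion B := sdiff_subset_sdiff le_rfl
    (biUnion_subset_biUnion_of_subset_left B (range_subset_range.2 hj.le))
  exact le_trans (by exact_mod_cast card_le_card (filter_subset_filter _ hsub))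
    (h.1 j hj).dominating

lemma IsBlockSequence.extend (h : G.IsBlockSequence Ω s i B S) (hs : 1 ≤ s)
    (hdeg : G.MinDegWithinGE Ω (0.48 * #Ω)) (hlink : G.IsRobustlyLinked Ω)
    (hpool : (i + 1 : ℝ) * (10 * s) ≤ 0.04 * #Ω) (hi : i * (0.6 : ℝ) ^ (2 * s * s) < 1) :
    ∃ B' S', G.IsBlockSequence Ω s (i + 1) B' S' := by
  have hs' : (1 : ℝ) ≤ s := by exact_mod_cast hs
  have hΩ : Ω.Nonempty := card_pos.1 (by
    have : (0 : ℝ) < #Ω := by nlinarith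
    exact_mod_cast this)
  have hP : 0.96 * (#Ω : ℝ) ≤ #(Ω \ (range i).biUnion B) := by
    nlinarith [h.card_le_card_pool]
  obtain ⟨Snew, Bnew, hnew, hnew_adj⟩ := exists_block hs hdeg hlink hΩ sdiff_subset hP S
    (fun j hj => h.card_filter_pool_le hj) hi
  obtain ⟨hblock, hadj⟩ := h
  have hpool_eq : ∀ j ≤ i, (range j).biUnion (Function.update B i Bnew) = (range j).biUnion B :=
    fun j hj => biUnion_congr rfl fun l hl =>
      Function.update_of_ne (by have := mem_range.1 hl; omega) _ _
  refine ⟨Function.update B i Bnew, Function.update S i Snew, fun j hj => ?_, fun j l hjl hl => ?_⟩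
  · rw [hpool_eq j (by omega)]
    rcases (Nat.lt_succ_iff_lt_or_eq.1 hj) with hj | rfl
    · rw [Function.update_of_ne hj.ne, Function.update_of_ne hj.ne]
      exact hblock j hj
    · simpa using hnew
  · rw [Function.update_of_ne (show j ≠ i by omega)]
    rcases (Nat.lt_succ_iff_lt_or_eq.1 hl) with hl | rfl
    · rw [Function.update_of_ne hl.ne]
      exact hadj j l hjl hl
    · simpa using hnew_adj j hjl

lemma IsBlockSequence.hasCompleteFinsetMinor {r : ℕ} (h : G.IsBlockSequence Ω s r B S) :
    G.HasCompleteFinsetMinor r := by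
  obtain ⟨hblock, hadj⟩ := h
  have hdisj : ∀ j l, j < l → l < r → Disjoint (B j) (B l) := fun j l hjl hl =>
    Finset.disjoint_left.2 fun x hxj hxl => (mem_sdiff.1 ((hblock l hl).subset_pool hxl)).2
      (mem_biUnion.2 ⟨j, mem_range.2 hjl, hxj⟩)
  have hadj' : ∀ j l, j < l → l < r → ∃ x ∈ B j, ∃ y ∈ B l, G.Adj x y := fun j l hjl hl => by
    obtain ⟨c, hc, x, hx, hxc⟩ := hadj j l hjl hl
    exact ⟨x, (hblock j (hjl.trans hl)).seed_subset hx, c, hc, hxc⟩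
  refine ⟨fun j => B j, fun j => (hblock j j.2).rooted, fun j l hjl => ?_, fun j l hjl => ?_⟩
  · rcases lt_or_gt_of_ne (Fin.val_ne_of_ne hjl) with h | h
    exacts [hdisj j l h l.2, (hdisj l j h j.2).symm]
  · rcases lt_or_gt_of_ne (Fin.val_ne_of_ne hjl) with h | h
    · exact hadj' j l h l.2
    · obtain ⟨x, hx, y, hy, hxy⟩ := hadj' l j h j.2
      exact ⟨y, hy, x, hx, hxy.symm⟩

lemma exists_isBlockSequence {r : ℕ} (hs : 1 ≤ s) (hdeg : G.MinDegWithinGE Ω (0.48 * #Ω))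
    (hlink : G.IsRobustlyLinked Ω) (hr : r * (10 * s : ℝ) ≤ 0.04 * #Ω)
    (hrs : r * (0.6 : ℝ) ^ (2 * s * s) < 1) : ∃ B S, G.IsBlockSequence Ω s r B S := by
  suffices ∀ i ≤ r, ∃ B S, G.IsBlockSequence Ω s i B S from this r le_rfl
  intro i
  induction i with
  | zero => exact fun _ => ⟨fun _ => ∅, fun _ => ∅, by simp [IsBlockSequence]⟩
  | succ i ih =>
    intro hi
    have hir : (i : ℝ) + 1 ≤ r := by exact_mod_cast hi
    obtain ⟨B, S, h⟩ := ih (by omega)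
    exact h.extend hs hdeg hlink (le_trans (by gcongr) hr)
      (lt_of_le_of_lt (by gcongr; linarith) hrs)

theorem hasCompleteFinsetMinor_of_isRobustlyLinked {r : ℕ}
    (hdeg : G.MinDegWithinGE Ω (0.48 * #Ω)) (hlink : G.IsRobustlyLinked Ω) (hΩ : Ω.Nonempty)
    (hr : 500 * r * (√(Real.log #Ω) + 1) ≤ #Ω) : G.HasCompleteFinsetMinor r := by
  have hΩpos : (0 : ℝ) < #Ω := by exact_mod_cast hΩ.card_pos
  set x := √(Real.log #Ω)
  have hx : 0 ≤ x := Real.sqrt_nonneg _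
  have hxx : x * x = Real.log #Ω :=
    Real.mul_self_sqrt (Real.log_nonneg (by exact_mod_cast hΩ.card_pos))
  have hsx : x ≤ ⌈x⌉₊ := Nat.le_ceil x
  have hsx' : (⌈x⌉₊ : ℝ) < x + 1 := Nat.ceil_lt_add_one hx
  have hr0 : (0 : ℝ) ≤ r := r.cast_nonneg
  set s := ⌈x⌉₊ + 1 with hs
  have hs' : (s : ℝ) = ⌈x⌉₊ + 1 := by rw [hs]; push_cast; rfl
  have hpool : r * (10 * s : ℝ) ≤ 0.04 * #Ω := by nlinarith
  have hrs : r * (0.6 : ℝ) ^ (2 * s * s) < 1 := by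
    calc (r : ℝ) * 0.6 ^ (2 * s * s) ≤ r * (#Ω : ℝ)⁻¹ := by
          gcongr
          exact pow_six_tenths_le_inv hΩpos (by nlinarith)
      _ < 1 := by
          rw [← div_eq_mul_inv, div_lt_one hΩpos]
          nlinarith
  obtain ⟨B, S, h⟩ := exists_isBlockSequence (by omega) hdeg hlink hpool hrs
  exact h.hasCompleteFinsetMinor

/-! ### Robustly linked subsets of dense sets -/

lemma card_filter_adj_le_of_subset {A W : Finset V} (hWA : W ⊆ A) (x : V) :
    (#{y ∈ A | G.Adj x y} : ℝ) ≤ #{y ∈ W | G.Adj x y} + (#A - #W) := by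
  have hsub : {y ∈ A | G.Adj x y} ⊆ {y ∈ W | G.Adj x y} ∪ (A \ W) := fun y hy => by
    simp only [mem_filter, mem_union, mem_sdiff] at hy ⊢
    tauto
  have h := (card_le_card hsub).trans (card_union_le _ _)
  rw [card_sdiff_of_subset hWA] at h
  have : #W ≤ #A := card_le_card hWA
  rw [← Nat.cast_sub this]
  exact_mod_cast h

lemma isRobustlyLinked_of_minDegWithinGE {A : Finset V} (h : G.MinDegWithinGE A (0.7 * #A)) :
    G.IsRobustlyLinked A := by
  intro W hWA hW x hx y hy _
  have hx' := (card_filter_adj_le_of_subset hWA x).trans' (h x (hWA hx))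
  have hy' := (card_filter_adj_le_of_subset hWA y).trans' (h y (hWA hy))
  have hWpos : (0 : ℝ) < #W := by exact_mod_cast card_pos.2 ⟨x, hx⟩
  obtain ⟨p, hp⟩ := inter_nonempty_of_card_lt_card_add_card (filter_subset (G.Adj x) W)
    (filter_subset (G.Adj y) W) (by
      have : (#W : ℝ) < #{y ∈ W | G.Adj x y} + #{z ∈ W | G.Adj y z} := by
        have : (#W : ℝ) ≤ #A := by exact_mod_cast card_le_card hWA
        linarith
      exact_mod_cast this)
  simp only [mem_inter, mem_filter] at hp
  exact .inr (.inl ⟨p, hp.1.1, hp.1.2, hp.2.2.symm⟩)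

lemma isRobustlyLinked_of_forall_exists_adj {Ω : Finset V}
    (hdeg : G.MinDegWithinGE Ω (#Ω / 2 - 2)) (hΩ : 100 ≤ #Ω)
    (hAB : ∀ A ⊆ Ω, ∀ B ⊆ Ω, Disjoint A B → 0.4 * (#Ω : ℝ) ≤ #A → 0.4 * (#Ω : ℝ) ≤ #B →
      ∃ a ∈ A, ∃ b ∈ B, G.Adj a b) :
    G.IsRobustlyLinked Ω := by
  intro W hWΩ hW x hx y hy _
  have hΩ' : (100 : ℝ) ≤ #Ω := by exact_mod_cast hΩ
  have hbig : ∀ z ∈ W, 0.4 * (#Ω : ℝ) ≤ #{w ∈ W | G.Adj z w} := fun z hz => by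
    have := (card_filter_adj_le_of_subset hWΩ z).trans' (hdeg z (hWΩ hz))
    linarith
  by_cases hcommon : ({w ∈ W | G.Adj x w} ∩ {w ∈ W | G.Adj y w}).Nonempty
  · obtain ⟨p, hp⟩ := hcommon
    simp only [mem_inter, mem_filter] at hp
    exact .inr (.inl ⟨p, hp.1.1, hp.1.2, hp.2.2.symm⟩)
  · obtain ⟨a, ha, b, hb, hab⟩ := hAB _ ((filter_subset _ _).trans hWΩ) _
      ((filter_subset _ _).trans hWΩ) (disjoint_iff_inter_eq_empty.2
        (not_nonempty_iff_eq_empty.1 hcommon)) (hbig x hx) (hbig y hy)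
    rw [mem_filter] at ha hb
    exact .inr (.inr ⟨a, ha.1, b, hb.1, ha.2, hab, hb.2.symm⟩)

lemma minDegWithinGE_of_anticomplete {Ω A B : Finset V} (hdeg : G.MinDegWithinGE Ω (#Ω / 2 - 2))
    (hΩ : 100 ≤ #Ω) (hAΩ : A ⊆ Ω) (hBΩ : B ⊆ Ω) (hAB : Disjoint A B)
    (hA : 0.4 * (#Ω : ℝ) ≤ #A) (hB : 0.4 * (#Ω : ℝ) ≤ #B) (hanti : ∀ a ∈ A, ∀ b ∈ B, ¬ G.Adj a b) :
    G.MinDegWithinGE A (0.7 * #A) := by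
  intro x hx
  have hsub : {y ∈ Ω | G.Adj x y} ⊆ {y ∈ Ω \ B | G.Adj x y} := fun y hy => by
    simp only [mem_filter, mem_sdiff] at hy ⊢
    exact ⟨⟨hy.1, fun hyB => hanti x hx y hyB hy.2⟩, hy.2⟩
  have h1 : (#{y ∈ Ω | G.Adj x y} : ℝ) ≤ #{y ∈ A | G.Adj x y} + (#(Ω \ B) - #A) :=
    (Nat.cast_le.2 (card_le_card hsub)).trans
      (card_filter_adj_le_of_subset (subset_sdiff.2 ⟨hAΩ, hAB⟩) x)
  have h2 : (#(Ω \ B) : ℝ) = #Ω - #B := by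
    rw [card_sdiff_of_subset hBΩ, Nat.cast_sub (card_le_card hBΩ)]
  have hΩ' : (100 : ℝ) ≤ #Ω := by exact_mod_cast hΩ
  linarith [hdeg x (hAΩ hx)]

theorem exists_isRobustlyLinked_subset {Ω : Finset V} (hdeg : G.MinDegWithinGE Ω (#Ω / 2 - 2))
    (hΩ : 100 ≤ #Ω) :
    ∃ D ⊆ Ω, 0.4 * (#Ω : ℝ) ≤ #D ∧ G.MinDegWithinGE D (0.48 * #D) ∧ G.IsRobustlyLinked D := by
  by_cases hAB : ∀ A ⊆ Ω, ∀ B ⊆ Ω, Disjoint A B → 0.4 * (#Ω : ℝ) ≤ #A →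
      0.4 * (#Ω : ℝ) ≤ #B → ∃ a ∈ A, ∃ b ∈ B, G.Adj a b
  · have hΩ' : (100 : ℝ) ≤ #Ω := by exact_mod_cast hΩ
    refine ⟨Ω, subset_rfl, by linarith, fun x hx => ?_,
      isRobustlyLinked_of_forall_exists_adj hdeg hΩ hAB⟩
    linarith [hdeg x hx]
  · push Not at hAB
    obtain ⟨A, hAΩ, B, hBΩ, hdisj, hA, hB, hanti⟩ := hAB
    have hdegA := minDegWithinGE_of_anticomplete hdeg hΩ hAΩ hBΩ hdisj hA hB hanti
    refine ⟨A, hAΩ, hA, fun x hx => ?_, isRobustlyLinked_of_minDegWithinGE hdegA⟩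
    nlinarith [hdegA x hx, (#A).cast_nonneg (α := ℝ)]

theorem hasCompleteFinsetMinor_of_minDegWithinGE {Ω : Finset V} {r : ℕ}
    (hdeg : G.MinDegWithinGE Ω (#Ω / 2 - 2)) (hΩ : 100 ≤ #Ω)
    (hr : 1250 * r * (√(Real.log #Ω) + 1) ≤ #Ω) : G.HasCompleteFinsetMinor r := by
  obtain ⟨D, hDΩ, hD, hdegD, hlinkD⟩ := exists_isRobustlyLinked_subset hdeg hΩ
  have hΩ' : (100 : ℝ) ≤ #Ω := by exact_mod_cast hΩ
  have hDpos : (0 : ℝ) < #D := by linarith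
  have hlog : √(Real.log #D) ≤ √(Real.log #Ω) :=
    Real.sqrt_le_sqrt (Real.log_le_log hDpos (by exact_mod_cast card_le_card hDΩ))
  refine hasCompleteFinsetMinor_of_isRobustlyLinked hdegD hlinkD
    (card_pos.1 (by exact_mod_cast hDpos)) ?_
  have hr0 : (0 : ℝ) ≤ r := r.cast_nonneg
  nlinarith

end Greedy

theorem hasCompleteFinsetMinor_of_edge_density [Fintype V] [DecidableEq V] {t : ℕ} (ht : 2 ≤ t)
    (G : SimpleGraph V) [DecidableRel G.Adj]
    (hG : 10000000 * (t + 1) * √(Real.log (t + 1)) * G.support.ncard < #G.edgeFinset) :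
    G.HasCompleteFinsetMinor (t + 1) := by
  have ht' : (3 : ℝ) ≤ t + 1 := by exact_mod_cast (by omega : 3 ≤ t + 1)
  have hσ : 1 ≤ √(Real.log (t + 1)) := Real.one_le_sqrt.2 (by
    rw [Real.le_log_iff_exp_le (by linarith)]
    linarith [Real.exp_one_lt_d9])
  refine minorClosed_of_dense_neighborhood (fun _ _ hHG h => HasCompleteFinsetMinor.mono hHG h)
    (fun _ _ _ huv h => HasCompleteFinsetMinor.of_contractEdge huv (by omega) h) (by positivity)
    (fun H _ v hkv hvk hcommon => ?_) G hG
  refine hasCompleteFinsetMinor_of_minDegWithinGE (Ω := H.neighborFinset v) (fun x hx => ?_) ?_ ?_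
  · have : {u ∈ H.neighborFinset v | H.Adj x u} = H.neighborFinset x ∩ H.neighborFinset v := by
      ext; simp [and_comm]
    rw [this, card_neighborFinset_eq_degree]
    linarith [hcommon x hx]
  · rw [card_neighborFinset_eq_degree]
    exact_mod_cast (by nlinarith : (100 : ℝ) ≤ H.degree v)
  · rw [card_neighborFinset_eq_degree]
    push_cast
    exact (mul_sqrt_log_add_one_le (d := H.degree v) ht' (by nlinarith) (by nlinarith)).trans hkv

end SimpleGraph

/-- Kostochka–Thomason: there is a constant `C > 0` such that every finite graph `G`
with no `K_{t+1}` minor has at most `C·(t+1)·√(log(t+1))·|V(G)|` edges. -/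
theorem kostochka_thomason :
    ∃ C : ℝ, C > 0 ∧
      ∀ (t : ℕ) (V : Type) [Fintype V] (G : SimpleGraph V),
        ¬ HasCompleteMinor G (t + 1) →
        (Nat.card G.edgeSet : ℝ) ≤
          C * (t + 1) * Real.sqrt (Real.log (t + 1)) * Fintype.card V := by
  refine ⟨10000000, by norm_num, fun t V _ G hG => ?_⟩
  classical
  rw [Nat.card_eq_fintype_card, ← SimpleGraph.edgeFinset_card]
  by_contra! hlt
  obtain ⟨e, he⟩ : G.edgeFinset.Nonempty := card_pos.1 (by
    have : (0 : ℝ) < #G.edgeFinset := lt_of_le_of_lt (by positivity) hlt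
    exact_mod_cast this)
  have ht : 2 ≤ t := by
    by_contra! ht
    induction e using Sym2.ind with
    | _ x y => exact hG ((SimpleGraph.hasCompleteFinsetMinor_two_of_adj (by simpa using he)).of_le
      (by omega)).hasCompleteMinor
  refine hG (SimpleGraph.hasCompleteFinsetMinor_of_edge_density ht G
    (lt_of_le_of_lt ?_ hlt)).hasCompleteMinor
  gcongr
  simpa [Nat.card_eq_fintype_card] using Set.ncard_le_card G.support
end

section
/- Let t ≥ 0 be an integer and let r be a real number such that every finite simple graph H with no K_{t+1} minor satisfies |E(H)| ≤ r·|V(H)|. Let G be a finite simple graph such that K_{t+1} is not a minor of G, and let A ⊆ V(G) be a stable (independent) set of vertices each of degree at least t in G. Then |E(G − A)| + |A| ≤ r·|V(G − A)|, where G − A denotes the subgraph of G induced on V(G) ∖ A. -/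
/-!
For each `a ∈ A` choose two non-adjacent neighbours `p a`, `q a`, distinct pairs for distinct
`a`. Deleting `A` and joining each pair `p a`, `q a` gives a minor of `G` (contract `a` into
`p a`), so it has no `K_{t+1}` minor; it has `|V(G − A)|` vertices and `|E(G − A)| + |A|` edges.
The pairs are chosen greedily: if every pair of neighbours of `a` were an edge or an already used
pair, then `a` with `t` of its neighbours would be a `(t+1)`-clique in the minor built so far.
-/

open SimpleGraph

variable {V W : Type} {G : SimpleGraph V}

namespace SimpleGraph

theorem Connected.reachable_induce_of_subset {s t : Set V} (hs : (G.induce s).Connected)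
    (hst : s ⊆ t) {x y : V} (hx : x ∈ s) (hy : y ∈ s) :
    (G.induce t).Reachable ⟨x, hst hx⟩ ⟨y, hst hy⟩ :=
  (hs ⟨x, hx⟩ ⟨y, hy⟩).map (induceHomOfLE G hst).toHom

theorem induce_connected_of_forall_adj {s : Set V} {c : V} (hc : c ∈ s)
    (h : ∀ v ∈ s, v ≠ c → G.Adj c v) : (G.induce s).Connected := by
  refine induce_connected_of_patches c hc fun {v} hv => ?_
  by_cases hvc : v = c
  · subst hvc
    exact ⟨{v}, by simpa using hv, rfl, rfl, .rfl⟩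
  · exact ⟨{c, v}, Set.insert_subset hc (by simpa using hv), by simp, by simp,
      induce_pair_connected_of_adj (h v hv hvc) _ _⟩

theorem induce_biUnion_connected {H : SimpleGraph W} {s : Set W} (hs : (H.induce s).Connected)
    {β : W → Set V} (hβ : ∀ w ∈ s, (G.induce (β w)).Connected)
    (hadj : ∀ u ∈ s, ∀ v ∈ s, H.Adj u v → ∃ x ∈ β u, ∃ y ∈ β v, G.Adj x y) :
    (G.induce (⋃ w ∈ s, β w)).Connected := by
  have hsub : ∀ w ∈ s, β w ⊆ ⋃ w ∈ s, β w := fun w hw => Set.subset_biUnion_of_mem hw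
  have hwalk : ∀ u v : s, (H.induce s).Walk u v → ∀ x (hx : x ∈ β u) y (hy : y ∈ β v),
      (G.induce (⋃ w ∈ s, β w)).Reachable ⟨x, hsub u u.2 hx⟩ ⟨y, hsub v v.2 hy⟩ := by
    intro u v walk
    induction walk with
    | @nil w => exact fun x hx y hy => (hβ w w.2).reachable_induce_of_subset (hsub w w.2) hx hy
    | @cons u m v hum _ ih =>
      intro x hx y hy
      obtain ⟨x', hx', z', hz', hxz⟩ := hadj u u.2 m m.2 hum
      obtain ⟨⟨z, hz⟩⟩ := (hβ m m.2).nonempty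
      have hum_conn := connected_induce_union (hβ u u.2).preconnected (hβ m m.2).preconnected
        hx' hz' hxz
      exact (hum_conn.reachable_induce_of_subset (Set.union_subset (hsub u u.2) (hsub m m.2))
        (Or.inl hx) (Or.inr hz)).trans (ih z hz y hy)
  rw [connected_iff]
  refine ⟨?_, ?_⟩
  · rintro ⟨x, hx⟩ ⟨y, hy⟩
    obtain ⟨u, hu, hxu⟩ := Set.mem_iUnion₂.1 hx
    obtain ⟨v, hv, hyv⟩ := Set.mem_iUnion₂.1 hy
    obtain ⟨walk⟩ := hs ⟨u, hu⟩ ⟨v, hv⟩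
    exact hwalk _ _ walk x hxu y hyv
  · obtain ⟨⟨w, hw⟩⟩ := hs.nonempty
    obtain ⟨⟨x, hx⟩⟩ := (hβ w hw).nonempty
    exact ⟨⟨x, hsub w hw hx⟩⟩

theorem IsClique.not_cliqueFree_of_le_ncard {n : ℕ} {s : Set V} (hs : G.IsClique s)
    (hfin : s.Finite) (hn : n ≤ s.ncard) : ¬ G.CliqueFree n := by
  obtain ⟨t, hts, rfl⟩ := Set.exists_subset_card_eq hn
  have ht := hfin.subset hts
  exact IsNClique.not_cliqueFree (s := ht.toFinset)
    ⟨by simpa using hs.subset hts, (Set.ncard_eq_toFinset_card t ht).symm⟩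

def replaceByEdges (G : SimpleGraph V) (S : Set V) (p q : V → V) : SimpleGraph ↥Sᶜ :=
  (G ⊔ fromEdgeSet ((fun a => s(p a, q a)) '' S)).induce Sᶜ

theorem replaceByEdges_adj {S : Set V} {p q : V → V} {u v : ↥Sᶜ} :
    (G.replaceByEdges S p q).Adj u v ↔
      G.Adj u v ∨ (∃ a ∈ S, s(p a, q a) = s(↑u, ↑v)) ∧ (u : V) ≠ v := by
  simp [replaceByEdges]

end SimpleGraph

theorem HasCompleteMinor.of_branchSets {H : SimpleGraph W} {n : ℕ} (h : HasCompleteMinor H n)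
    (β : W → Set V) (hconn : ∀ w, (G.induce (β w)).Connected)
    (hdisj : Pairwise fun u v => Disjoint (β u) (β v))
    (hadj : ∀ u v, H.Adj u v → ∃ x ∈ β u, ∃ y ∈ β v, G.Adj x y) :
    HasCompleteMinor G n := by
  obtain ⟨g, hne, hgconn, hgdisj, hgadj⟩ := h
  refine ⟨fun i => ⋃ w ∈ g i, β w, fun i => ?_,
    fun i => induce_biUnion_connected (hgconn i) (fun w _ => hconn w) fun u _ v _ => hadj u v,
    fun i j hij => ?_, fun i j hij => ?_⟩
  · obtain ⟨w, hw⟩ := hne i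
    obtain ⟨⟨x, hx⟩⟩ := (hconn w).nonempty
    exact ⟨x, Set.mem_biUnion hw hx⟩
  · refine Set.disjoint_iUnion₂_left.2 fun u hu => Set.disjoint_iUnion₂_right.2 fun v hv => ?_
    exact hdisj fun huv => Set.disjoint_left.1 (hgdisj hij) hu (huv ▸ hv)
  · obtain ⟨u, hu, v, hv, huv⟩ := hgadj i j hij
    obtain ⟨x, hx, y, hy, hxy⟩ := hadj u v huv
    exact ⟨x, Set.mem_biUnion hu hx, y, Set.mem_biUnion hv hy, hxy⟩

theorem HasCompleteMinor.of_not_cliqueFree {n : ℕ} (h : ¬ G.CliqueFree n) :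
    HasCompleteMinor G n := by
  obtain ⟨c⟩ := (not_cliqueFree_iff_top_isContained n).1 h
  refine ⟨fun i => {c i}, fun i => Set.singleton_nonempty _,
    fun i => induce_connected_of_forall_adj rfl fun v hv hne => (hne hv).elim,
    fun i j hij => Set.disjoint_singleton.2 (c.injective.ne hij),
    fun i j hij => ⟨c i, rfl, c j, rfl, c.toHom.map_adj hij⟩⟩

theorem HasCompleteMinor.of_replaceByEdges {S : Set V} {p q : V → V}
    (hp : ∀ a ∈ S, G.Adj a (p a)) (hq : ∀ a ∈ S, G.Adj a (q a)) {n : ℕ}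
    (h : HasCompleteMinor (G.replaceByEdges S p q) n) : HasCompleteMinor G n := by
  refine h.of_branchSets (fun w => insert ↑w {a | a ∈ S ∧ p a = w}) (fun w => ?_) ?_ ?_
  · refine induce_connected_of_forall_adj (Set.mem_insert _ _) ?_
    rintro v (rfl | ⟨hv, hpv⟩) hne
    · exact (hne rfl).elim
    · exact hpv ▸ (hp v hv).symm
  · intro u v huv
    rw [Set.disjoint_left]
    rintro x (rfl | ⟨hxS, hxu⟩) (hxv | ⟨hxS, hxv⟩)
    · exact huv (Subtype.ext hxv)
    · exact u.2 hxS
    · exact v.2 (hxv ▸ hxS)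
    · exact huv (Subtype.ext (hxu.symm.trans hxv))
  · intro u v huv
    rcases replaceByEdges_adj.1 huv with huv | ⟨⟨a, ha, hpq⟩, -⟩
    · exact ⟨u, Set.mem_insert _ _, v, Set.mem_insert _ _, huv⟩
    rcases Sym2.eq_iff.1 hpq with ⟨hpu, hqv⟩ | ⟨hpv, hqu⟩
    · exact ⟨a, Or.inr ⟨ha, hpu⟩, v, Set.mem_insert _ _, hqv ▸ hq a ha⟩
    · exact ⟨u, Set.mem_insert _ _, a, Or.inr ⟨ha, hpv⟩, (hqu ▸ hq a ha).symm⟩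

theorem exists_nonadj_pair_notMem_of_not_hasCompleteMinor [Finite V] {t : ℕ}
    (hG : ¬ HasCompleteMinor G (t + 1)) {S : Set V} {p q : V → V}
    (hp : ∀ a ∈ S, G.Adj a (p a)) (hq : ∀ a ∈ S, G.Adj a (q a)) {a : V} (haS : a ∉ S)
    (hNS : ∀ v, G.Adj a v → v ∉ S) (hdeg : t ≤ (G.neighborSet a).ncard) :
    ∃ x y, G.Adj a x ∧ G.Adj a y ∧ x ≠ y ∧ ¬ G.Adj x y ∧
      s(x, y) ∉ (fun b => s(p b, q b)) '' S := by
  by_contra! hall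
  refine hG (HasCompleteMinor.of_replaceByEdges hp hq (HasCompleteMinor.of_not_cliqueFree
    (IsClique.not_cliqueFree_of_le_ncard (s := Subtype.val ⁻¹' insert a (G.neighborSet a))
      ?_ (Set.toFinite _) ?_)))
  · rintro ⟨x, hxS⟩ (rfl | hx) ⟨y, hyS⟩ (rfl | hy) hne <;> rw [replaceByEdges_adj]
    · exact (hne rfl).elim
    · exact Or.inl hy
    · exact Or.inl hx.symm
    · by_cases hxy : G.Adj x y
      · exact Or.inl hxy
      · have hxy' : x ≠ y := fun h => hne (Subtype.ext h)
        obtain ⟨b, hb, hpq⟩ := hall x y hx hy hxy' hxy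
        exact Or.inr ⟨⟨b, hb, hpq⟩, hxy'⟩
  · have hrange : insert a (G.neighborSet a) ⊆ Set.range ((↑) : ↥Sᶜ → V) := by
      rintro v (rfl | hv)
      · exact ⟨⟨v, haS⟩, rfl⟩
      · exact ⟨⟨v, hNS v hv⟩, rfl⟩
    rw [Set.ncard_preimage_of_injective_subset_range Subtype.val_injective hrange,
      Set.ncard_insert_of_notMem G.notMem_neighborSet_self]
    omega

theorem exists_injOn_nonadj_pairs [Finite V] {t : ℕ} (hG : ¬ HasCompleteMinor G (t + 1))
    {A : Set V} (hA : G.IsIndepSet A) (hdeg : ∀ a ∈ A, t ≤ (G.neighborSet a).ncard) :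
    ∃ p q : V → V,
      (∀ a ∈ A, G.Adj a (p a) ∧ G.Adj a (q a) ∧ p a ≠ q a ∧ ¬ G.Adj (p a) (q a)) ∧
      A.InjOn fun a => s(p a, q a) := by
  classical
  induction A, A.toFinite using Set.Finite.induction_on with
  | empty => exact ⟨id, id, by simp, Set.injOn_empty _⟩
  | @insert a S haS _ ih =>
    obtain ⟨p, q, hpq, hinj⟩ :=
      ih (Set.Pairwise.mono (Set.subset_insert a S) hA) fun b hb => hdeg b (Or.inr hb)
    have hNS : ∀ v, G.Adj a v → v ∉ S := fun v hav hvS =>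
      hA (Or.inl rfl) (Or.inr hvS) (G.ne_of_adj hav) hav
    obtain ⟨x, y, hx, hy, hxy, hnxy, hnew⟩ := exists_nonadj_pair_notMem_of_not_hasCompleteMinor
      hG (fun b hb => (hpq b hb).1) (fun b hb => (hpq b hb).2.1) haS hNS (hdeg a (Or.inl rfl))
    have hupd : ∀ b ∈ S, Function.update p a x b = p b ∧ Function.update q a y b = q b :=
      fun b hb => have hba : b ≠ a := ne_of_mem_of_not_mem hb haS
        ⟨Function.update_of_ne hba _ _, Function.update_of_ne hba _ _⟩
    refine ⟨Function.update p a x, Function.update q a y, ?_, ?_⟩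
    · rintro b (rfl | hb)
      · simp [hx, hy, hxy, hnxy]
      · rw [(hupd b hb).1, (hupd b hb).2]
        exact hpq b hb
    · refine (Set.injOn_insert haS).2 ⟨fun b hb c hc hbc => hinj hb hc ?_, ?_⟩
      · simpa only [(hupd b hb).1, (hupd b hb).2, (hupd c hc).1, (hupd c hc).2] using hbc
      · rintro ⟨b, hb, hbx⟩
        simp only [(hupd b hb).1, (hupd b hb).2, Function.update_self] at hbx
        exact hnew ⟨b, hb, hbx⟩

theorem card_edgeSet_induce_add_ncard_le [Finite V] {S : Set V} {p q : V → V}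
    (hpS : ∀ a ∈ S, p a ∉ S) (hqS : ∀ a ∈ S, q a ∉ S) (hne : ∀ a ∈ S, p a ≠ q a)
    (hnadj : ∀ a ∈ S, ¬ G.Adj (p a) (q a)) (hinj : S.InjOn fun a => s(p a, q a)) :
    Nat.card (G.induce Sᶜ).edgeSet + S.ncard ≤ Nat.card (G.replaceByEdges S p q).edgeSet := by
  let φ : S → Sym2 ↥Sᶜ := fun a => s(⟨p a, hpS a a.2⟩, ⟨q a, hqS a a.2⟩)
  have hφ : φ.Injective := fun a b hab =>
    Subtype.ext (hinj a.2 b.2 (by simpa [φ] using congrArg (Sym2.map Subtype.val) hab))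
  have hdisj : Disjoint (G.induce Sᶜ).edgeSet (Set.range φ) := by
    rw [Set.disjoint_right]
    rintro _ ⟨a, rfl⟩ ha
    exact hnadj a a.2 ha
  have hsub : (G.induce Sᶜ).edgeSet ∪ Set.range φ ⊆ (G.replaceByEdges S p q).edgeSet := by
    rintro _ (he | ⟨a, rfl⟩)
    · exact edgeSet_mono (fun u v h => replaceByEdges_adj.2 (Or.inl h)) he
    · exact replaceByEdges_adj.2 (Or.inr ⟨⟨a, a.2, rfl⟩, hne a a.2⟩)
  calc Nat.card (G.induce Sᶜ).edgeSet + S.ncard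
      = ((G.induce Sᶜ).edgeSet ∪ Set.range φ).ncard := by
        rw [Set.ncard_union_eq hdisj, Set.ncard_range_of_injective hφ, Nat.card_coe_set_eq,
          Nat.card_coe_set_eq]
    _ ≤ (G.replaceByEdges S p q).edgeSet.ncard := Set.ncard_le_ncard hsub
    _ = Nat.card (G.replaceByEdges S p q).edgeSet := (Nat.card_coe_set_eq _).symm

/-- If every finite graph with no `K_{t+1}` minor has at most `r·|V|` edges, `G` has no
`K_{t+1}` minor, and `A` is a stable set of vertices each of degree at least `t`, then
`|E(G − A)| + |A| ≤ r·|V(G − A)|`. -/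
theorem stable_set_bound (t : ℕ) (r : ℝ)
    (hR : ∀ (W : Type) [Fintype W] (H : SimpleGraph W),
      ¬ HasCompleteMinor H (t + 1) → (Nat.card H.edgeSet : ℝ) ≤ r * Fintype.card W)
    (V : Type) [Fintype V] (G : SimpleGraph V)
    (hG : ¬ HasCompleteMinor G (t + 1))
    (A : Set V)
    (hstable : ∀ a ∈ A, ∀ b ∈ A, ¬ G.Adj a b)
    (hdeg : ∀ a ∈ A, t ≤ (G.neighborSet a).ncard) :
    (Nat.card (G.induce (Aᶜ : Set V)).edgeSet : ℝ) + A.ncard ≤ r * (Aᶜ : Set V).ncard := by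
  classical
  obtain ⟨p, q, hpq, hinj⟩ :=
    exists_injOn_nonadj_pairs hG (fun a ha b hb _ => hstable a ha b hb) hdeg
  have hH : ¬ HasCompleteMinor (G.replaceByEdges A p q) (t + 1) := fun h =>
    hG (h.of_replaceByEdges (fun a ha => (hpq a ha).1) fun a ha => (hpq a ha).2.1)
  have hcount := card_edgeSet_induce_add_ncard_le
    (fun a ha hpa => hstable a ha _ hpa (hpq a ha).1)
    (fun a ha hqa => hstable a ha _ hqa (hpq a ha).2.1)
    (fun a ha => (hpq a ha).2.2.1) (fun a ha => (hpq a ha).2.2.2) hinj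
  calc (Nat.card (G.induce Aᶜ).edgeSet : ℝ) + A.ncard
      ≤ Nat.card (G.replaceByEdges A p q).edgeSet := by exact_mod_cast hcount
    _ ≤ r * Fintype.card ↥Aᶜ := hR _ _ hH
    _ = r * (Aᶜ : Set V).ncard := by rw [← Nat.card_eq_fintype_card, Nat.card_coe_set_eq]
end

section
/- Let t ≥ 0 be an integer and suppose that: (i) there exists an integer s₁ such that every finite simple graph with no K_{t+1} minor admits a partition of its vertex set into t sets each inducing a subgraph of maximum degree at most s₁; and (ii) for every integer Δ there exists an integer s₂ such that every finite simple graph G with no K_{t+1} minor and with maximum degree at most Δ admits a partition of V(G) into 4 sets X_1, …, X_4 such that every connected component of each induced subgraph G|X_j has at most s₂ vertices. Then there exists an integer s such that every finite simple graph G with no K_{t+1} minor admits a partition of V(G) into 4t sets Y_1, …, Y_{4t} such that every connected component of each induced subgraph G|Y_k has at most s vertices. -/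
open Function

def IsPartition {V ι : Type*} (X : ι → Set V) : Prop :=
  Pairwise (Disjoint on X) ∧ ⋃ i, X i = Set.univ

namespace IsPartition

variable {V ι κ : Type*} {X : ι → Set V}

lemma comp_equiv (hX : IsPartition X) (e : κ ≃ ι) : IsPartition (X ∘ e) :=
  ⟨hX.1.comp_of_injective e.injective, by rw [← hX.2]; exact e.surjective.iUnion_comp X⟩

lemma refine (hX : IsPartition X) {Y : ∀ i, κ → Set (X i)} (hY : ∀ i, IsPartition (Y i)) :
    IsPartition fun p : κ × ι => ((↑) : X p.2 → V) '' Y p.2 p.1 := by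
  constructor
  · rintro ⟨j, i⟩ ⟨j', i'⟩ hne
    by_cases hi : i = i'
    · subst hi
      have hj : j ≠ j' := fun h => hne (by rw [h])
      exact (Set.disjoint_image_iff Subtype.val_injective).mpr ((hY i).1 hj)
    · exact Set.disjoint_of_subset Set.image_val_subset Set.image_val_subset (hX.1 hi)
  · refine Set.eq_univ_of_forall fun v => ?_
    obtain ⟨i, hvi⟩ := Set.mem_iUnion.mp (hX.2 ▸ Set.mem_univ v)
    obtain ⟨j, hj⟩ := Set.mem_iUnion.mp ((hY i).2 ▸ Set.mem_univ (⟨v, hvi⟩ : X i))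
    exact Set.mem_iUnion.mpr ⟨(j, i), ⟨v, hvi⟩, hj, rfl⟩

end IsPartition

namespace SimpleGraph

variable {V W : Type*} {G : SimpleGraph V} {H : SimpleGraph W}

noncomputable def Embedding.induceImageIso (f : G ↪g H) (S : Set V) :
    G.induce S ≃g H.induce (f '' S) where
  toEquiv := Equiv.Set.image f S f.injective
  map_rel_iff' := by simp

lemma ncard_neighborSet_induce (X : Set V) (v : X) :
    ((G.induce X).neighborSet v).ncard = {u | u ∈ X ∧ G.Adj v u}.ncard := by
  rw [← Set.ncard_image_of_injective _ Subtype.val_injective]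
  congr 1
  ext u
  constructor
  · rintro ⟨w, hw, rfl⟩
    exact ⟨w.2, hw⟩
  · rintro ⟨hu, hadj⟩
    exact ⟨⟨u, hu⟩, hadj, rfl⟩

lemma Iso.ncard_supp_le {s : ℕ} (φ : G ≃g H)
    (h : ∀ c : G.ConnectedComponent, c.supp.ncard ≤ s) (c : H.ConnectedComponent) :
    c.supp.ncard ≤ s := by
  obtain ⟨c, rfl⟩ := φ.connectedComponentEquiv.surjective c
  rw [← Nat.card_coe_set_eq, ← Nat.card_congr (ConnectedComponent.isoEquivSupp φ c),
    Nat.card_coe_set_eq]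
  exact h c

end SimpleGraph

open SimpleGraph

lemma HasCompleteMinor.map {V W : Type} {G : SimpleGraph V} {H : SimpleGraph W} {n : ℕ}
    (f : G ↪g H) (h : HasCompleteMinor G n) : HasCompleteMinor H n := by
  obtain ⟨B, hne, hconn, hdisj, hadj⟩ := h
  refine ⟨fun i => f '' B i, fun i => (hne i).image f, fun i => ?_,
    fun i j hij => (Set.disjoint_image_iff f.injective).mpr (hdisj hij), fun i j hij => ?_⟩
  · exact (f.induceImageIso (B i)).connected_iff.mp (hconn i)
  · obtain ⟨x, hx, y, hy, hxy⟩ := hadj i j hij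
    exact ⟨f x, ⟨x, hx, rfl⟩, f y, ⟨y, hy, rfl⟩, f.map_adj_iff.mpr hxy⟩

lemma MaxDegWithinLE.ncard_neighborSet_induce_le {V : Type} {G : SimpleGraph V} {X : Set V}
    {s : ℕ} (h : MaxDegWithinLE G X s) (v : X) : ((G.induce X).neighborSet v).ncard ≤ s :=
  (ncard_neighborSet_induce X v).trans_le (h v v.2)

/-- Suppose (i) there is `s₁` such that every finite graph with no `K_{t+1}` minor has a
partition into `t` sets each inducing a subgraph of maximum degree at most `s₁`, and
(ii) for every `Δ` there is `s₂` such that every finite graph with no `K_{t+1}` minor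
and maximum degree at most `Δ` has a partition into `4` sets each inducing a subgraph
whose components have at most `s₂` vertices. Then there is `s` such that every finite
graph with no `K_{t+1}` minor has a partition into `4t` sets each inducing a subgraph
whose components have at most `s` vertices. -/
theorem fragmentation_4t (t : ℕ)
    (h1 : ∃ s₁ : ℕ, ∀ (V : Type) [Fintype V] (G : SimpleGraph V),
      ¬ HasCompleteMinor G (t + 1) →
      ∃ X : Fin t → Set V,
        (Pairwise fun i j => Disjoint (X i) (X j)) ∧
        (⋃ i, X i) = Set.univ ∧
        ∀ i, MaxDegWithinLE G (X i) s₁)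
    (h2 : ∀ Δ : ℕ, ∃ s₂ : ℕ, ∀ (V : Type) [Fintype V] (G : SimpleGraph V),
      ¬ HasCompleteMinor G (t + 1) →
      (∀ v : V, (G.neighborSet v).ncard ≤ Δ) →
      ∃ X : Fin 4 → Set V,
        (Pairwise fun i j => Disjoint (X i) (X j)) ∧
        (⋃ i, X i) = Set.univ ∧
        ∀ j, ∀ c : (G.induce (X j)).ConnectedComponent, c.supp.ncard ≤ s₂) :
    ∃ s : ℕ, ∀ (V : Type) [Fintype V] (G : SimpleGraph V),
      ¬ HasCompleteMinor G (t + 1) →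
      ∃ Y : Fin (4 * t) → Set V,
        (Pairwise fun i j => Disjoint (Y i) (Y j)) ∧
        (⋃ i, Y i) = Set.univ ∧
        ∀ k, ∀ c : (G.induce (Y k)).ConnectedComponent, c.supp.ncard ≤ s := by
  obtain ⟨s₁, h1⟩ := h1
  obtain ⟨s₂, h2⟩ := h2 s₁
  refine ⟨s₂, fun V _ G hG => ?_⟩
  obtain ⟨X, hXdisj, hXcov, hXdeg⟩ := h1 V G hG
  have hsplit : ∀ i, ∃ Y : Fin 4 → Set (X i), IsPartition Y ∧
      ∀ j, ∀ c : ((G.induce (X i)).induce (Y j)).ConnectedComponent, c.supp.ncard ≤ s₂ := by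
    intro i
    have := Fintype.ofFinite (X i)
    obtain ⟨Y, hYdisj, hYcov, hYcomp⟩ := h2 (X i) (G.induce (X i))
      (mt (HasCompleteMinor.map (Embedding.induce (X i))) hG) (hXdeg i).ncard_neighborSet_induce_le
    exact ⟨Y, ⟨hYdisj, hYcov⟩, hYcomp⟩
  choose Y hYpart hYcomp using hsplit
  obtain ⟨hdisj, hcov⟩ :=
    (IsPartition.refine ⟨hXdisj, hXcov⟩ hYpart).comp_equiv finProdFinEquiv.symm
  refine ⟨_, hdisj, hcov, fun k => ?_⟩
  set p := finProdFinEquiv.symm k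
  exact ((Embedding.induce (X p.2)).induceImageIso (Y p.2 p.1)).ncard_supp_le (hYcomp p.2 p.1)
end
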